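/- arXiv:1109.5726 — 7 statements merged into one kernel-verified Lean document; each statement's English description precedes it below -/
import Mathlib

section
/- Let X be a Banach space with monotone normalized basis (e_k), partial sums (Q_n). Let 𝔻 = {(n,k) : 1 ≤ k ≤ n} with the lexicographic order. Define T : c_00(𝔻) → X by T(Σ μ_{nk} f_{nk}) = Σ 2^{k−n} μ_{nk} e_k and, for (N,K) ∈ 𝔻, U_{NK} : X → c_00(𝔻) by U_{NK}(Σ λ_k e_k) = (3/4) Σ_{(n,k) ≤ (N,K)} 2^{k−n} λ_k f_{nk}. Then for every x ∈ X, ‖T U_{NK} x‖_X ≤ (1 − 4^{−N}) ‖x‖_X. -/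
/-- The finite set of pairs `(n,k) ∈ 𝔻` (i.e. `1 ≤ k ≤ n`) with `(n,k) ≤ (N,K)` in the
lexicographic order. -/
def Dle (N K : ℕ) : Finset (ℕ × ℕ) :=
  (Finset.Icc 1 N ×ˢ Finset.Icc 1 N).filter
    (fun p => 1 ≤ p.2 ∧ p.2 ≤ p.1 ∧ (p.1 < N ∨ (p.1 = N ∧ p.2 ≤ K)))

/-- The lexicographic order on pairs `(n,k)`. -/
def lexLe (p q : ℕ × ℕ) : Prop := p.1 < q.1 ∨ (p.1 = q.1 ∧ p.2 ≤ q.2)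

/-- The operator `U_{NK}` of Claim 2: `U_{NK}(Σ λ_k e_k) = (3/4) Σ_{(n,k) ≤ (N,K)}
2^{k−n} λ_k f_{nk}`, written in terms of the coordinates `λ` and landing in
`c₀₀(𝔻)` (finitely supported functions on `ℕ × ℕ`). -/
noncomputable def Uop (lam : ℕ → ℝ) (N K : ℕ) : (ℕ × ℕ) →₀ ℝ :=
  ∑ p ∈ Dle N K, Finsupp.single p ((3 / 4) * (2 : ℝ) ^ ((p.2 : ℤ) - (p.1 : ℤ)) * lam p.2)

/-- The operator `T : c₀₀(𝔻) → X`, `T(Σ μ_{nk} f_{nk}) = Σ 2^{k−n} μ_{nk} e_k`. -/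
noncomputable def Tmap {X : Type*} [NormedAddCommGroup X] [NormedSpace ℝ X]
    (e : ℕ → X) (g : (ℕ × ℕ) →₀ ℝ) : X :=
  ∑ p ∈ g.support, ((2 : ℝ) ^ ((p.2 : ℤ) - (p.1 : ℤ)) * g p) • e p.2

/-- Closed form for the partial geometric sums appearing in `T ∘ U`. -/
lemma geom_aux (k M : ℕ) (h : k ≤ M + 1) :
    (3 / 4 : ℝ) * ∑ n ∈ Finset.Icc k M, (4 : ℝ) ^ ((k : ℤ) - n)
      = 1 - (4 : ℝ) ^ ((k : ℤ) - M - 1) := by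
  have h1 : ∑ n ∈ Finset.Icc k M, (4 : ℝ) ^ ((k : ℤ) - n)
      = ∑ j ∈ Finset.range (M + 1 - k), ((4 : ℝ)⁻¹) ^ j := by
    rw [← Finset.Ico_add_one_right_eq_Icc, Finset.sum_Ico_eq_sum_range]
    apply Finset.sum_congr rfl
    intro j _
    have hj : (k : ℤ) - (k + j : ℕ) = -(j : ℤ) := by push_cast; ring
    rw [hj, zpow_neg, zpow_natCast, inv_pow]
  have h2 : (4 : ℝ) ^ ((k : ℤ) - M - 1) = ((4 : ℝ)⁻¹) ^ (M + 1 - k) := by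
    have hj : (k : ℤ) - M - 1 = -((M + 1 - k : ℕ) : ℤ) := by omega
    rw [hj, zpow_neg, zpow_natCast, inv_pow]
  rw [h1, geom_sum_eq (by norm_num : (4 : ℝ)⁻¹ ≠ 1), h2]
  ring

/-- The monotone-coefficient inequality: if `(a k)` is nonnegative and nonincreasing on
`[1, n]`, then `‖Σ_{k=1}^n a_k λ_k e_k‖ ≤ a 1 ‖x‖`. -/
lemma key_abel {X : Type*} [NormedAddCommGroup X] [NormedSpace ℝ X]
    (e : ℕ → X) (lam : ℕ → ℝ) (Q : ℕ → X →L[ℝ] X) (x : X)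
    (hQnorm : ∀ n, ‖Q n‖ ≤ 1)
    (hQ : ∀ n, Q n x = ∑ k ∈ Finset.Icc 1 n, lam k • e k) :
    ∀ (n : ℕ) (a : ℕ → ℝ), (∀ m, 1 ≤ m → m ≤ n → 0 ≤ a m) →
      (∀ m, 1 ≤ m → m < n → a (m + 1) ≤ a m) →
      ‖∑ k ∈ Finset.Icc 1 n, (a k * lam k) • e k‖ ≤ (if n = 0 then 0 else a 1) * ‖x‖ := by
  intro n
  induction n with
  | zero => intro a _ _; simp
  | succ n ih =>
    intro a ha hmono
    have han1 : 0 ≤ a (n + 1) := ha (n + 1) (by omega) le_rfl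
    have hQle : ‖Q (n + 1) x‖ ≤ ‖x‖ := by
      calc ‖Q (n + 1) x‖ ≤ ‖Q (n + 1)‖ * ‖x‖ := (Q (n + 1)).le_opNorm x
        _ ≤ 1 * ‖x‖ := mul_le_mul_of_nonneg_right (hQnorm _) (norm_nonneg x)
        _ = ‖x‖ := one_mul _
    have chain : ∀ i j, 1 ≤ i → i ≤ j → j ≤ n + 1 → a j ≤ a i := by
      intro i j hi hij hj
      induction j, hij using Nat.le_induction with
      | base => exact le_rfl
      | succ j hij ih2 =>
        exact le_trans (hmono j (le_trans hi hij) (by omega)) (ih2 (by omega))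
    have hsplit : ∑ k ∈ Finset.Icc 1 (n + 1), (a k * lam k) • e k
        = (∑ k ∈ Finset.Icc 1 n, ((a k - a (n + 1)) * lam k) • e k)
          + a (n + 1) • Q (n + 1) x := by
      rw [hQ (n + 1), Finset.smul_sum]
      have h1 : ∑ k ∈ Finset.Icc 1 (n + 1), ((a k - a (n + 1)) * lam k) • e k
          = ∑ k ∈ Finset.Icc 1 n, ((a k - a (n + 1)) * lam k) • e k := by
        rw [Finset.sum_Icc_succ_top (by omega : 1 ≤ n + 1)]
        simp
      rw [← h1, ← Finset.sum_add_distrib]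
      apply Finset.sum_congr rfl
      intro k _
      rw [smul_smul, ← add_smul]
      congr 1
      ring
    rw [hsplit]
    have IH := ih (fun k => a k - a (n + 1))
      (fun m hm hmn => sub_nonneg.mpr (chain m (n + 1) hm (by omega) le_rfl))
      (fun m hm hmn => by simpa using hmono m hm (by omega))
    have hB : ‖a (n + 1) • Q (n + 1) x‖ ≤ a (n + 1) * ‖x‖ := by
      rw [norm_smul, Real.norm_eq_abs, abs_of_nonneg han1]
      exact mul_le_mul_of_nonneg_left hQle han1
    have := norm_add_le (∑ k ∈ Finset.Icc 1 n, ((a k - a (n + 1)) * lam k) • e k)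
      (a (n + 1) • Q (n + 1) x)
    simp only [Nat.succ_ne_zero, if_false]
    refine le_trans this (le_trans (add_le_add IH hB) ?_)
    rcases Nat.eq_zero_or_pos n with hn | hn
    · subst hn
      norm_num
    · rw [if_neg (by omega)]
      exact le_of_eq (by ring)

/-- Let `X` be a Banach space with a monotone normalized basis `(e_k)`
(partial sums `Q_n`, `‖Q n‖ ≤ 1`, `‖e k‖ = 1`), and let `x = Σ λ_k e_k ∈ X`.  Then for
every `(N,K) ∈ 𝔻`, `‖T U_{NK} x‖ ≤ (1 − 4^{−N}) ‖x‖`. -/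
theorem norm_TU_le
    (X : Type*) [NormedAddCommGroup X] [NormedSpace ℝ X] [CompleteSpace X]
    (e : ℕ → X) (lam : ℕ → ℝ) (Q : ℕ → X →L[ℝ] X) (x : X)
    (hnorme : ∀ k, 1 ≤ k → ‖e k‖ = 1)
    (hQnorm : ∀ n, ‖Q n‖ ≤ 1)
    (hQ : ∀ n, Q n x = ∑ k ∈ Finset.Icc 1 n, lam k • e k)
    (hx : Filter.Tendsto (fun n => Q n x) Filter.atTop (nhds x))
    (N K : ℕ) (hK : 1 ≤ K) (hKN : K ≤ N) :
    ‖Tmap e (Uop lam N K)‖ ≤ (1 - (4 : ℝ) ^ (-(N : ℤ))) * ‖x‖ := by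
  classical
  have hN : 1 ≤ N := le_trans hK hKN
  set a : ℕ → ℝ := fun k =>
    if k ≤ K then 1 - (4 : ℝ) ^ ((k : ℤ) - N - 1) else 1 - (4 : ℝ) ^ ((k : ℤ) - N) with ha_def
  -- Step 1: evaluate `Uop`.
  have hUapp : ∀ p, (Uop lam N K) p
      = if p ∈ Dle N K then (3 / 4 : ℝ) * (2 : ℝ) ^ ((p.2 : ℤ) - (p.1 : ℤ)) * lam p.2 else 0 := by
    intro p
    rw [Uop, Finsupp.finset_sum_apply]
    simp only [Finsupp.single_apply]
    exact Finset.sum_ite_eq' _ _ _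
  have hsupp : (Uop lam N K).support ⊆ Dle N K := by
    intro p hp
    by_contra hnp
    exact (Finsupp.mem_support_iff.mp hp) (by rw [hUapp p, if_neg hnp])
  -- Step 2: compute `T (U x)` as a sum over `Dle N K`.
  have hT : Tmap e (Uop lam N K)
      = ∑ p ∈ Dle N K,
          ((3 / 4 : ℝ) * (4 : ℝ) ^ ((p.2 : ℤ) - (p.1 : ℤ)) * lam p.2) • e p.2 := by
    rw [Tmap, Finset.sum_subset hsupp (fun p _ hp => by
      rw [Finsupp.notMem_support_iff.mp hp]; simp)]
    apply Finset.sum_congr rfl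
    intro p hp
    rw [hUapp p, if_pos hp]
    congr 1
    have h4 : (4 : ℝ) ^ ((p.2 : ℤ) - (p.1 : ℤ))
        = (2 : ℝ) ^ ((p.2 : ℤ) - (p.1 : ℤ)) * (2 : ℝ) ^ ((p.2 : ℤ) - (p.1 : ℤ)) := by
      rw [← mul_zpow]; norm_num
    rw [h4]; ring
  -- Step 3: group the sum by the second coordinate.
  have hgroup : ∑ p ∈ Dle N K,
        ((3 / 4 : ℝ) * (4 : ℝ) ^ ((p.2 : ℤ) - (p.1 : ℤ)) * lam p.2) • e p.2
      = ∑ k ∈ Finset.Icc 1 N, (a k * lam k) • e k := by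
    rw [Dle, Finset.sum_filter, Finset.sum_product]
    rw [Finset.sum_comm]
    apply Finset.sum_congr rfl
    intro k hk
    have hk1 : 1 ≤ k := (Finset.mem_Icc.mp hk).1
    have hkN : k ≤ N := (Finset.mem_Icc.mp hk).2
    set M : ℕ := if k ≤ K then N else N - 1 with hM
    have hfilter : ∑ n ∈ Finset.Icc 1 N,
          (if 1 ≤ k ∧ k ≤ n ∧ (n < N ∨ (n = N ∧ k ≤ K)) then
            ((3 / 4 : ℝ) * (4 : ℝ) ^ ((k : ℤ) - (n : ℤ)) * lam k) • e k else 0)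
        = ∑ n ∈ Finset.Icc k M,
            ((3 / 4 : ℝ) * (4 : ℝ) ^ ((k : ℤ) - (n : ℤ)) * lam k) • e k := by
      rw [← Finset.sum_filter]
      apply Finset.sum_congr _ (fun _ _ => rfl)
      ext n
      simp only [Finset.mem_filter, Finset.mem_Icc]
      by_cases hkK : k ≤ K
      · rw [hM, if_pos hkK]; omega
      · rw [hM, if_neg hkK]; omega
    have hterm : ∀ n : ℕ, ((3 / 4 : ℝ) * (4 : ℝ) ^ ((k : ℤ) - (n : ℤ)) * lam k) • e k
        = (4 : ℝ) ^ ((k : ℤ) - (n : ℤ)) • (((3 / 4 : ℝ) * lam k) • e k) := by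
      intro n; rw [smul_smul]; congr 1; ring
    calc ∑ n ∈ Finset.Icc 1 N,
          (if 1 ≤ k ∧ k ≤ n ∧ (n < N ∨ (n = N ∧ k ≤ K)) then
            ((3 / 4 : ℝ) * (4 : ℝ) ^ ((k : ℤ) - (n : ℤ)) * lam k) • e k else 0)
        = ∑ n ∈ Finset.Icc k M,
            ((3 / 4 : ℝ) * (4 : ℝ) ^ ((k : ℤ) - (n : ℤ)) * lam k) • e k := hfilter
      _ = (∑ n ∈ Finset.Icc k M, (4 : ℝ) ^ ((k : ℤ) - (n : ℤ)))
            • (((3 / 4 : ℝ) * lam k) • e k) := by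
          rw [Finset.sum_smul]
          exact Finset.sum_congr rfl fun n _ => hterm n
      _ = ((3 / 4 : ℝ) * (∑ n ∈ Finset.Icc k M, (4 : ℝ) ^ ((k : ℤ) - (n : ℤ))) * lam k)
            • e k := by rw [smul_smul]; congr 1; ring
      _ = (a k * lam k) • e k := by
          congr 1
          have hkM : k ≤ M + 1 := by
            by_cases hkK : k ≤ K
            · rw [hM, if_pos hkK]; omega
            · rw [hM, if_neg hkK]; omega
          have hg := geom_aux k M hkM
          have hak : (3 / 4 : ℝ) * ∑ n ∈ Finset.Icc k M, (4 : ℝ) ^ ((k : ℤ) - (n : ℤ))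
              = a k := by
            rw [hg]
            simp only [ha_def]
            by_cases hkK : k ≤ K
            · rw [if_pos hkK]
              have hMN : M = N := by rw [hM, if_pos hkK]
              rw [hMN]
            · rw [if_neg hkK]
              have hMN : M = N - 1 := by rw [hM, if_neg hkK]
              rw [hMN]
              have hexp : (k : ℤ) - ((N - 1 : ℕ) : ℤ) - 1 = (k : ℤ) - (N : ℤ) := by omega
              rw [hexp]
          rw [← hak]
  rw [hT, hgroup]
  -- Step 4: apply the monotone-coefficient inequality.
  have h4pos : (0 : ℝ) < 4 := by norm_num
  have h14 : (1 : ℝ) ≤ 4 := by norm_num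
  have ha_nonneg : ∀ m, 1 ≤ m → m ≤ N → 0 ≤ a m := by
    intro m hm hmN
    simp only [ha_def]
    by_cases hmK : m ≤ K
    · rw [if_pos hmK]
      have : (4 : ℝ) ^ ((m : ℤ) - N - 1) ≤ 1 :=
        zpow_le_one_of_nonpos₀ h14 (by omega)
      linarith
    · rw [if_neg hmK]
      have : (4 : ℝ) ^ ((m : ℤ) - N) ≤ 1 :=
        zpow_le_one_of_nonpos₀ h14 (by omega)
      linarith
  have ha_mono : ∀ m, 1 ≤ m → m < N → a (m + 1) ≤ a m := by
    intro m hm hmN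
    simp only [ha_def]
    by_cases hm1K : m + 1 ≤ K
    · rw [if_pos hm1K, if_pos (by omega)]
      have : (4 : ℝ) ^ ((m : ℤ) - N - 1) ≤ (4 : ℝ) ^ (((m : ℕ) + 1 : ℤ) - N - 1) :=
        zpow_le_zpow_right₀ h14 (by omega)
      push_cast at this ⊢
      linarith
    · by_cases hmK : m ≤ K
      · rw [if_neg (by push_cast; omega), if_pos hmK]
        have : (4 : ℝ) ^ ((m : ℤ) - N - 1) ≤ (4 : ℝ) ^ (((m : ℕ) + 1 : ℤ) - N) :=
          zpow_le_zpow_right₀ h14 (by omega)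
        push_cast at this ⊢
        linarith
      · rw [if_neg (by push_cast; omega), if_neg hmK]
        have : (4 : ℝ) ^ ((m : ℤ) - N) ≤ (4 : ℝ) ^ (((m : ℕ) + 1 : ℤ) - N) :=
          zpow_le_zpow_right₀ h14 (by omega)
        push_cast at this ⊢
        linarith
  have hkey := key_abel e lam Q x hQnorm hQ N a ha_nonneg ha_mono
  rw [if_neg (by omega)] at hkey
  have ha1 : a 1 = 1 - (4 : ℝ) ^ (-(N : ℤ)) := by
    simp only [ha_def]
    rw [if_pos hK]
    congr 1
    push_cast
    ring_nf
  rw [ha1] at hkey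
  exact hkey
end

section
/- With T and U_{NK} as defined (T(Σ μ_{nk} f_{nk}) = Σ 2^{k−n} μ_{nk} e_k and U_{NK}(Σ λ_k e_k) = (3/4) Σ_{(n,k) ≤ (N,K)} 2^{k−n} λ_k f_{nk}): for every x in the linear span of the basis vectors {e_1, e_2, …}, T U_{NK} x → x as (N,K) → ∞ in the lexicographically ordered set 𝔻. -/
lemma Uop_apply (lam : ℕ → ℝ) (N K : ℕ) (q : ℕ × ℕ) :
    Uop lam N K q = if q ∈ Dle N K then (3 / 4) * (2 : ℝ) ^ ((q.2 : ℤ) - (q.1 : ℤ)) * lam q.2 else 0 := by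
  unfold Uop
  rw [Finsupp.finset_sum_apply]
  simp_rw [Finsupp.single_apply]
  exact Finset.sum_ite_eq' (Dle N K) q
    (fun p => (3 / 4) * (2 : ℝ) ^ ((p.2 : ℤ) - (p.1 : ℤ)) * lam p.2)

lemma Tmap_Uop {X : Type*} [NormedAddCommGroup X] [NormedSpace ℝ X]
    (e : ℕ → X) (lam : ℕ → ℝ) (N K : ℕ) :
    Tmap e (Uop lam N K) =
      ∑ p ∈ Dle N K, ((3 / 4) * (4 : ℝ) ^ ((p.2 : ℤ) - (p.1 : ℤ)) * lam p.2) • e p.2 := by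
  have hsub : (Uop lam N K).support ⊆ Dle N K := by
    intro q hq
    by_contra h
    exact Finsupp.mem_support_iff.1 hq (by rw [Uop_apply, if_neg h])
  unfold Tmap
  rw [Finset.sum_subset hsub (fun p _ hns => by
    rw [Finsupp.notMem_support_iff.1 hns, mul_zero, zero_smul])]
  refine Finset.sum_congr rfl fun p hp => ?_
  rw [Uop_apply, if_pos hp, show (4:ℝ) = 2*2 by norm_num, mul_zpow]
  ring_nf

lemma key_regroup {X : Type*} [NormedAddCommGroup X] [NormedSpace ℝ X]
    (e : ℕ → X) (lam : ℕ → ℝ) (N K : ℕ) :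
    Tmap e (Uop lam N K)
      = ∑ k ∈ Finset.Icc 1 N, ((∑ n ∈ Finset.Icc 1 N,
          if 1 ≤ k ∧ k ≤ n ∧ (n < N ∨ (n = N ∧ k ≤ K)) then (3/4) * (4:ℝ)^((k:ℤ)-(n:ℤ)) else 0)
          * lam k) • e k := by
  rw [Tmap_Uop]
  unfold Dle
  rw [Finset.sum_filter, Finset.sum_product, Finset.sum_comm]
  refine Finset.sum_congr rfl fun k hk => ?_
  rw [Finset.sum_mul, Finset.sum_smul]
  refine Finset.sum_congr rfl fun n hn => ?_
  simp only [ite_mul, zero_mul, ite_smul, zero_smul]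

lemma geom_col (k L : ℕ) (h : k ≤ L) :
    ∑ n ∈ Finset.Icc k L, (3/4:ℝ) * (4:ℝ)^((k:ℤ)-(n:ℤ)) = 1 - (4:ℝ)⁻¹^(L+1-k) := by
  rw [← Finset.Ico_add_one_right_eq_Icc, Finset.sum_Ico_eq_sum_range]
  have h4 : ∀ j : ℕ, (4:ℝ)^((k:ℤ)-((k+j:ℕ):ℤ)) = (4:ℝ)⁻¹^j := by
    intro j
    push_cast
    rw [show (k:ℤ) - (k+j) = -j by ring, zpow_neg, ← inv_zpow, zpow_natCast]
  simp_rw [h4]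
  have hd : L + 1 - k = (L - k) + 1 := by omega
  rw [hd, ← Finset.mul_sum, geom_sum_eq (by norm_num)]
  field_simp
  ring

/-- If `x` lies in the linear span of the basis vectors (say
`x = Σ_{k=1}^m λ_k e_k` with `λ_k = 0` for `k > m`), then `T U_{NK} x → x` as
`(N,K) → ∞` along the lexicographic order of `𝔻`. -/
theorem TU_tendsto_of_mem_span
    (X : Type*) [NormedAddCommGroup X] [NormedSpace ℝ X] [CompleteSpace X]
    (e : ℕ → X) (lam : ℕ → ℝ) (x : X) (m : ℕ)
    (hx : x = ∑ k ∈ Finset.Icc 1 m, lam k • e k)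
    (hlam : ∀ k, m < k → lam k = 0) :
    ∀ ε : ℝ, 0 < ε → ∃ N₀ K₀ : ℕ, 1 ≤ K₀ ∧ K₀ ≤ N₀ ∧
      ∀ N K : ℕ, 1 ≤ K → K ≤ N → lexLe (N₀, K₀) (N, K) →
        ‖Tmap e (Uop lam N K) - x‖ < ε := by
  intro ε hε
  set C : ℝ := ∑ k ∈ Finset.Icc 1 m, |lam k| * ‖e k‖ with hCdef
  have hC0 : 0 ≤ C := Finset.sum_nonneg fun k _ => mul_nonneg (abs_nonneg _) (norm_nonneg _)
  have hC1 : (0:ℝ) < C + 1 := by linarith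
  obtain ⟨n, hn⟩ := exists_pow_lt_of_lt_one (div_pos hε hC1) (show (4:ℝ)⁻¹ < 1 by norm_num)
  refine ⟨m + n + 1, m + n + 1, by omega, le_refl _, ?_⟩
  intro N K hK1 hKN hlex
  have hN : m + n + 1 ≤ N := by
    rcases hlex with h | ⟨h, _⟩ <;> simp at h <;> omega
  -- rewrite x as a sum over Icc 1 N
  have hx' : x = ∑ k ∈ Finset.Icc 1 N, lam k • e k := by
    rw [hx]
    refine Finset.sum_subset (Finset.Icc_subset_Icc le_rfl (by omega)) fun k hk hnk => ?_
    simp only [Finset.mem_Icc] at hk hnk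
    rw [hlam k (by omega), zero_smul]
  rw [key_regroup, hx', ← Finset.sum_sub_distrib]
  simp_rw [← sub_smul, ← sub_one_mul]
  -- drop terms with k > m
  rw [← Finset.sum_subset (Finset.Icc_subset_Icc le_rfl (show m ≤ N by omega))
      (fun k hk hnk => by
        simp only [Finset.mem_Icc] at hk hnk
        rw [hlam k (by omega), mul_zero, zero_smul])]
  -- bound each coefficient
  have hcoef : ∀ k ∈ Finset.Icc 1 m,
      |(∑ n' ∈ Finset.Icc 1 N,
          if 1 ≤ k ∧ k ≤ n' ∧ (n' < N ∨ (n' = N ∧ k ≤ K)) then (3/4) * (4:ℝ)^((k:ℤ)-(n':ℤ)) else 0) - 1|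
        ≤ (4:ℝ)⁻¹ ^ n := by
    intro k hk
    simp only [Finset.mem_Icc] at hk
    rw [← Finset.sum_filter]
    by_cases hkK : k ≤ K
    · have hset : (Finset.Icc 1 N).filter
          (fun n' => 1 ≤ k ∧ k ≤ n' ∧ (n' < N ∨ (n' = N ∧ k ≤ K))) = Finset.Icc k N := by
        ext a
        simp only [Finset.mem_filter, Finset.mem_Icc]
        omega
      rw [hset, geom_col k N (by omega)]
      rw [show (1:ℝ) - (4:ℝ)⁻¹^(N+1-k) - 1 = -((4:ℝ)⁻¹^(N+1-k)) by ring, abs_neg,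
        abs_of_nonneg (by positivity)]
      exact pow_le_pow_of_le_one (by norm_num) (by norm_num) (by omega)
    · have hNbig : m + n + 1 < N := by
        rcases hlex with h | ⟨h, h2⟩
        · simpa using h
        · simp only at h h2; omega
      have hset : (Finset.Icc 1 N).filter
          (fun n' => 1 ≤ k ∧ k ≤ n' ∧ (n' < N ∨ (n' = N ∧ k ≤ K))) = Finset.Icc k (N-1) := by
        ext a
        simp only [Finset.mem_filter, Finset.mem_Icc]
        omega
      rw [hset, geom_col k (N-1) (by omega)]
      rw [show (1:ℝ) - (4:ℝ)⁻¹^(N-1+1-k) - 1 = -((4:ℝ)⁻¹^(N-1+1-k)) by ring, abs_neg,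
        abs_of_nonneg (by positivity)]
      exact pow_le_pow_of_le_one (by norm_num) (by norm_num) (by omega)
  -- final estimate
  have hbound : ‖∑ k ∈ Finset.Icc 1 m,
      (((∑ n' ∈ Finset.Icc 1 N,
          if 1 ≤ k ∧ k ≤ n' ∧ (n' < N ∨ (n' = N ∧ k ≤ K)) then (3/4) * (4:ℝ)^((k:ℤ)-(n':ℤ)) else 0) - 1)
        * lam k) • e k‖ ≤ (4:ℝ)⁻¹ ^ n * C := by
    refine le_trans (norm_sum_le _ _) ?_
    rw [hCdef, Finset.mul_sum]
    refine Finset.sum_le_sum fun k hk => ?_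
    rw [norm_smul, norm_mul]
    have h1 := hcoef k hk
    have : ‖(∑ n' ∈ Finset.Icc 1 N,
        if 1 ≤ k ∧ k ≤ n' ∧ (n' < N ∨ (n' = N ∧ k ≤ K)) then (3/4) * (4:ℝ)^((k:ℤ)-(n':ℤ)) else 0) - 1‖
        ≤ (4:ℝ)⁻¹ ^ n := h1
    calc ‖(∑ n' ∈ Finset.Icc 1 N,
        if 1 ≤ k ∧ k ≤ n' ∧ (n' < N ∨ (n' = N ∧ k ≤ K)) then (3/4) * (4:ℝ)^((k:ℤ)-(n':ℤ)) else 0) - 1‖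
          * ‖lam k‖ * ‖e k‖
        ≤ (4:ℝ)⁻¹ ^ n * ‖lam k‖ * ‖e k‖ := by
          gcongr
      _ = (4:ℝ)⁻¹ ^ n * (|lam k| * ‖e k‖) := by rw [Real.norm_eq_abs]; ring
  refine lt_of_le_of_lt hbound ?_
  have h2 : (4:ℝ)⁻¹ ^ n * C ≤ (4:ℝ)⁻¹ ^ n * (C + 1) := by
    have : (0:ℝ) ≤ (4:ℝ)⁻¹ ^ n := by positivity
    nlinarith
  refine lt_of_le_of_lt h2 ?_
  rw [← lt_div_iff₀ hC1]
  exact hn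
end

section
/- Let X, Y_k (k ∈ ℕ) be Banach spaces with monotone norms ‖·‖_{X⊕Y_k} on X ⊕ Y_k extending ‖·‖_X and ‖·‖_{Y_k} (i.e., ‖x + y_k‖_{X⊕Y_k} ≥ ‖x‖_X). Define Λ(X⊕Y_k) as the set of functionals x* + Σ_k α_k y_k* with ‖x* + y_k*‖_{X⊕Y_k} ≤ 1, 0 ≤ α_k ≤ 1, Σ α_k² ≤ 1, and define Σ(X⊕Y_k) as the space of z = x + Σ_k y_k with Σ_k ‖y_k‖²_{Y_k} < ∞, normed by ‖z‖_Σ = sup{|z*(z)| : z* ∈ Λ(X⊕Y_k)}. Then max{‖x‖_X, (1/2)(Σ_k ‖y_k‖²_{Y_k})^{1/2}} ≤ ‖x + Σ_k y_k‖_Σ ≤ ‖x‖_X + (Σ_k ‖y_k‖²_{Y_k})^{1/2}. In particular, Σ(X⊕Y_k) is isomorphic to the ℓ²-sum of X, Y_1, Y_2, …. -/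
open Finset in
private lemma cs_tsum {f g : ℕ → ℝ} (hf0 : ∀ k, 0 ≤ f k) (hg0 : ∀ k, 0 ≤ g k)
    (hf : Summable fun k => f k ^ 2) (hg : Summable fun k => g k ^ 2) :
    Summable (fun k => f k * g k) ∧
      (∑' k, f k * g k) ≤ Real.sqrt (∑' k, f k ^ 2) * Real.sqrt (∑' k, g k ^ 2) := by
  have hsum : Summable (fun k => f k * g k) := by
    apply Summable.of_nonneg_of_le (fun k => mul_nonneg (hf0 k) (hg0 k))
      (fun k => ?_) (((hf.add hg).div_const 2))
    rw [div_eq_inv_mul, ← sub_nonneg]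
    nlinarith [sq_nonneg (f k - g k)]
  refine ⟨hsum, Summable.tsum_le_of_sum_le hsum fun s => ?_⟩
  have h1 : (∑ i ∈ s, f i * g i) ^ 2 ≤ (∑ i ∈ s, f i ^ 2) * ∑ i ∈ s, g i ^ 2 :=
    Finset.sum_mul_sq_le_sq_mul_sq s f g
  have h2 : ∑ i ∈ s, f i * g i ≤ Real.sqrt ((∑ i ∈ s, f i ^ 2) * ∑ i ∈ s, g i ^ 2) := by
    calc ∑ i ∈ s, f i * g i = Real.sqrt ((∑ i ∈ s, f i * g i) ^ 2) :=
          (Real.sqrt_sq (Finset.sum_nonneg fun i _ => mul_nonneg (hf0 i) (hg0 i))).symm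
      _ ≤ _ := Real.sqrt_le_sqrt h1
  refine h2.trans ?_
  rw [Real.sqrt_mul (Finset.sum_nonneg fun i _ => sq_nonneg _)]
  gcongr
  · exact Summable.sum_le_tsum s (fun i _ => sq_nonneg _) hf
  · exact Summable.sum_le_tsum s (fun i _ => sq_nonneg _) hg


/-- `N` is a norm on `X × Y` which coincides with the given norms on `X` and on `Y`
and is monotone in the sense that `‖x + y‖_{X⊕Y} ≥ ‖x‖_X`. -/
def IsCompatibleNorm (X Y : Type*) [NormedAddCommGroup X] [NormedSpace ℝ X]
    [NormedAddCommGroup Y] [NormedSpace ℝ Y] (N : X × Y → ℝ) : Prop :=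
  (∀ u v : X × Y, N (u + v) ≤ N u + N v) ∧
  (∀ (c : ℝ) (u : X × Y), N (c • u) = |c| * N u) ∧
  (∀ u : X × Y, N u = 0 → u = 0) ∧
  (∀ x : X, N (x, 0) = ‖x‖) ∧
  (∀ y : Y, N ((0 : X), y) = ‖y‖) ∧
  (∀ (x : X) (y : Y), ‖x‖ ≤ N (x, y))

/-- The norm `‖·‖_Σ` of the generalized `ℓ²`-sum `Σ(X ⊕ Y_k)`:
`‖x + Σ_k y_k‖_Σ = sup {|z*(x + Σ y_k)| : z* ∈ Λ(X ⊕ Y_k)}`, where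
`Λ(X ⊕ Y_k)` consists of the functionals `x* + Σ_k α_k y_k*` with
`‖x* + y_k*‖_{X⊕Y_k} ≤ 1`, `0 ≤ α_k ≤ 1` and `Σ_k α_k² ≤ 1`. -/
noncomputable def sigmaNorm {X : Type*} [NormedAddCommGroup X] [NormedSpace ℝ X]
    {Y : ℕ → Type*} [∀ k, NormedAddCommGroup (Y k)] [∀ k, NormedSpace ℝ (Y k)]
    (N : ∀ k, X × Y k → ℝ) (x : X) (y : ∀ k, Y k) : ℝ :=
  sSup {r : ℝ | ∃ (xs : X →L[ℝ] ℝ) (ys : ∀ k, Y k →L[ℝ] ℝ) (α : ℕ → ℝ),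
    (∀ (k : ℕ) (a : X) (b : Y k), |xs a + ys k b| ≤ N k (a, b)) ∧
    (∀ k, 0 ≤ α k) ∧ (∀ k, α k ≤ 1) ∧
    (Summable fun k => (α k) ^ 2) ∧ (∑' k, (α k) ^ 2) ≤ 1 ∧
    r = |xs x + ∑' k, α k * ys k (y k)|}

/-- The dual norm `‖x* + Σ_k y_k*‖_Σ` of a functional on `Σ(X ⊕ Y_k)`, i.e. its
supremum over the unit ball of `(Σ(X ⊕ Y_k), ‖·‖_Σ)`. -/
noncomputable def sigmaOpNorm {X : Type*} [NormedAddCommGroup X] [NormedSpace ℝ X]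
    {Y : ℕ → Type*} [∀ k, NormedAddCommGroup (Y k)] [∀ k, NormedSpace ℝ (Y k)]
    (N : ∀ k, X × Y k → ℝ) (xs : X →L[ℝ] ℝ) (ys : ∀ k, Y k →L[ℝ] ℝ) : ℝ :=
  sSup {r : ℝ | ∃ (x : X) (y : ∀ k, Y k),
    (Summable fun k => ‖y k‖ ^ 2) ∧ sigmaNorm N x y ≤ 1 ∧
    r = |xs x + ∑' k, ys k (y k)|}

/-- The dual norm `‖x* + y*‖_{X⊕Y}` of a pair of functionals with respect to the
norm `N` on `X × Y`. -/
noncomputable def pairDualNorm {X Y : Type*} [NormedAddCommGroup X] [NormedSpace ℝ X]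
    [NormedAddCommGroup Y] [NormedSpace ℝ Y]
    (N : X × Y → ℝ) (xs : X →L[ℝ] ℝ) (ys : Y →L[ℝ] ℝ) : ℝ :=
  sSup {r : ℝ | ∃ u : X × Y, N u ≤ 1 ∧ r = |xs u.1 + ys u.2|}

set_option maxHeartbeats 1000000 in
/-- (Lemma on equivalence.)  For the generalized `ℓ²`-sum:
`max{‖x‖, (1/2)(Σ_k ‖y_k‖²)^{1/2}} ≤ ‖x + Σ_k y_k‖_Σ ≤ ‖x‖ + (Σ_k ‖y_k‖²)^{1/2}`;
in particular `Σ(X ⊕ Y_k)` is isomorphic to the standard `ℓ²`-sum of `X, Y₁, Y₂, …`. -/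
theorem sigmaNorm_equiv
    (X : Type*) [NormedAddCommGroup X] [NormedSpace ℝ X] [CompleteSpace X]
    (Y : ℕ → Type*) [∀ k, NormedAddCommGroup (Y k)] [∀ k, NormedSpace ℝ (Y k)]
    [∀ k, CompleteSpace (Y k)]
    (N : ∀ k, X × Y k → ℝ) (hN : ∀ k, IsCompatibleNorm X (Y k) (N k))
    (x : X) (y : ∀ k, Y k) (hy : Summable fun k => ‖y k‖ ^ 2) :
    max ‖x‖ ((1 / 2) * Real.sqrt (∑' k, ‖y k‖ ^ 2)) ≤ sigmaNorm N x y ∧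
      sigmaNorm N x y ≤ ‖x‖ + Real.sqrt (∑' k, ‖y k‖ ^ 2) := by

  classical
  set T := ∑' k, ‖y k‖ ^ 2 with hT
  have hT0 : 0 ≤ T := tsum_nonneg fun k => sq_nonneg _
  set S := {r : ℝ | ∃ (xs : X →L[ℝ] ℝ) (ys : ∀ k, Y k →L[ℝ] ℝ) (α : ℕ → ℝ),
    (∀ (k : ℕ) (a : X) (b : Y k), |xs a + ys k b| ≤ N k (a, b)) ∧
    (∀ k, 0 ≤ α k) ∧ (∀ k, α k ≤ 1) ∧
    (Summable fun k => (α k) ^ 2) ∧ (∑' k, (α k) ^ 2) ≤ 1 ∧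
    r = |xs x + ∑' k, α k * ys k (y k)|} with hS
  have hSsig : sigmaNorm N x y = sSup S := rfl
  -- upper bound for every element of S
  have hub : ∀ r ∈ S, r ≤ ‖x‖ + Real.sqrt T := by
    rintro r ⟨xs, ys, α, hle, hα0, hα1, hαsum, hαle, rfl⟩
    have hxs : ∀ a : X, |xs a| ≤ ‖a‖ := by
      intro a
      have := hle 0 a 0
      simpa [(hN 0).2.2.2.1 a] using this
    have hys : ∀ k (b : Y k), |ys k b| ≤ ‖b‖ := by
      intro k b
      have := hle k 0 b
      simpa [(hN k).2.2.2.2.1 b] using this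
    have hterm : ∀ k, |α k * ys k (y k)| ≤ α k * ‖y k‖ := by
      intro k
      rw [abs_mul, abs_of_nonneg (hα0 k)]
      exact mul_le_mul_of_nonneg_left (hys k (y k)) (hα0 k)
    obtain ⟨hcs_sum, hcs_le⟩ := cs_tsum hα0 (fun k => norm_nonneg (y k)) hαsum hy
    have habs : Summable (fun k => |α k * ys k (y k)|) :=
      Summable.of_nonneg_of_le (fun k => abs_nonneg _) hterm hcs_sum
    have h3 : |∑' k, α k * ys k (y k)| ≤ ∑' k, |α k * ys k (y k)| := by
      have := norm_tsum_le_tsum_norm (f := fun k => α k * ys k (y k))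
          (by simp only [Real.norm_eq_abs]; exact habs)
      simp only [Real.norm_eq_abs] at this
      exact this
    have h4 : (∑' k, |α k * ys k (y k)|) ≤ ∑' k, α k * ‖y k‖ :=
      Summable.tsum_le_tsum hterm habs hcs_sum
    have h5 : Real.sqrt (∑' k, (α k) ^ 2) ≤ 1 := Real.sqrt_le_one.2 hαle
    have h6 : Real.sqrt (∑' k, (α k) ^ 2) * Real.sqrt T ≤ 1 * Real.sqrt T :=
      mul_le_mul_of_nonneg_right h5 (Real.sqrt_nonneg _)
    have h7 : |xs x + ∑' k, α k * ys k (y k)| ≤ |xs x| + |∑' k, α k * ys k (y k)| :=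
      abs_add_le _ _
    have h8 := hxs x
    rw [one_mul] at h6
    linarith [hcs_le]
  have hbdd : BddAbove S := ⟨‖x‖ + Real.sqrt T, fun r hr => hub r hr⟩
  -- ‖x‖ is attained
  have hmem1 : ‖x‖ ∈ S := by
    obtain ⟨g, hg1, hgx⟩ : ∃ g : X →L[ℝ] ℝ, ‖g‖ ≤ 1 ∧ g x = ‖x‖ := by
      rcases eq_or_ne x 0 with h | h
      · exact ⟨0, by simp, by simp [h]⟩
      · obtain ⟨g, hg, hgx⟩ := exists_dual_vector ℝ x (norm_ne_zero_iff.mpr h)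
        exact ⟨g, hg.le, by exact_mod_cast hgx⟩
    refine ⟨g, fun k => 0, fun k => 0, ?_, fun k => le_rfl, fun k => zero_le_one, ?_, ?_, ?_⟩
    · intro k a b
      simp only [ContinuousLinearMap.zero_apply, add_zero]
      calc |g a| ≤ ‖g‖ * ‖a‖ := (g.le_opNorm a).trans_eq (by simp)
        _ ≤ 1 * ‖a‖ := by gcongr
        _ = ‖a‖ := one_mul _
        _ ≤ N k (a, b) := (hN k).2.2.2.2.2 a b
    · simpa using summable_zero
    · simp
    · simp [hgx]
  have h1 : ‖x‖ ≤ sigmaNorm N x y := by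
    rw [hSsig]; exact le_csSup hbdd hmem1
  refine ⟨max_le h1 ?_, ?_⟩
  · -- (1/2) √T ≤ sigmaNorm
    rcases eq_or_lt_of_le hT0 with h0 | hTpos
    · rw [← h0]
      simpa using (norm_nonneg x).trans h1
    · have hsT : 0 < Real.sqrt T := Real.sqrt_pos.2 hTpos
      -- dual vectors for each y k
      have hgk : ∀ k, ∃ g : Y k →L[ℝ] ℝ, ‖g‖ ≤ 1 ∧ g (y k) = ‖y k‖ := by
        intro k
        rcases eq_or_ne (y k) 0 with h | h
        · exact ⟨0, by simp, by simp [h]⟩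
        · obtain ⟨g, hg, hgy⟩ := exists_dual_vector ℝ (y k) (norm_ne_zero_iff.mpr h)
          exact ⟨g, hg.le, by exact_mod_cast hgy⟩
      choose g hg1 hgy using hgk
      have hmem2 : (1 / 2) * Real.sqrt T ∈ S := by
        refine ⟨0, fun k => (1 / 2 : ℝ) • g k, fun k => ‖y k‖ / Real.sqrt T, ?_, ?_, ?_, ?_, ?_, ?_⟩
        · intro k a b
          simp only [ContinuousLinearMap.zero_apply, zero_add,
            ContinuousLinearMap.smul_apply, smul_eq_mul, abs_mul]
          have hb : |g k b| ≤ ‖b‖ := by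
            calc |g k b| ≤ ‖g k‖ * ‖b‖ := by simpa using (g k).le_opNorm b
              _ ≤ 1 * ‖b‖ := by gcongr; exact hg1 k
              _ = ‖b‖ := one_mul _
          have hbN : ‖b‖ ≤ 2 * N k (a, b) := by
            have htri := (hN k).1 (a, b) (-a, 0)
            have heq : (a, b) + ((-a : X), (0 : Y k)) = ((0 : X), b) := by
              simp [Prod.ext_iff]
            rw [heq, (hN k).2.2.2.2.1 b, (hN k).2.2.2.1 (-a), norm_neg] at htri
            have haN : ‖a‖ ≤ N k (a, b) := (hN k).2.2.2.2.2 a b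
            linarith
          rw [abs_of_nonneg (by norm_num : (0:ℝ) ≤ 1/2)]
          linarith [hb.trans hbN]
        · intro k; positivity
        · intro k
          rw [div_le_one hsT]
          exact Real.le_sqrt_of_sq_le (Summable.le_tsum hy k fun j _ => sq_nonneg _)
        · have : (fun k => (‖y k‖ / Real.sqrt T) ^ 2) = fun k => ‖y k‖ ^ 2 / T := by
            funext k
            rw [div_pow, Real.sq_sqrt hT0]
          rw [this]
          exact hy.div_const T
        · have : (fun k => (‖y k‖ / Real.sqrt T) ^ 2) = fun k => ‖y k‖ ^ 2 / T := by
            funext k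
            rw [div_pow, Real.sq_sqrt hT0]
          rw [this, tsum_div_const, ← hT, div_self hTpos.ne']
        · have hterm : (fun k => (‖y k‖ / Real.sqrt T) * ((1 / 2 : ℝ) • g k) (y k))
              = fun k => ‖y k‖ ^ 2 * (1 / (2 * Real.sqrt T)) := by
            funext k
            simp only [ContinuousLinearMap.smul_apply, smul_eq_mul, hgy k]
            field_simp
          rw [ContinuousLinearMap.zero_apply, zero_add, hterm, tsum_mul_right, ← hT]
          rw [abs_of_nonneg (by positivity)]
          field_simp
          nlinarith [Real.sq_sqrt hT0, Real.sqrt_nonneg T]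
      rw [hSsig]
      exact le_csSup hbdd hmem2
  · -- upper bound
    rw [hSsig]
    exact Real.sSup_le hub (by positivity)
end

section
/- In the setting of the generalized ℓ²-sum Σ(X⊕Y_k): the dual norm of ‖·‖_Σ satisfies max{‖x*‖_X, (Σ_k ‖y_k*‖²_{Y_k})^{1/2}} ≤ ‖x* + Σ_k y_k*‖_Σ ≤ ‖x*‖_X + 2(Σ_k ‖y_k*‖²_{Y_k})^{1/2} for x* ∈ X*, y_k* ∈ Y_k*. -/
set_option maxHeartbeats 1000000
set_option linter.unusedSectionVars false

section aux
variable {X Y : Type*} [NormedAddCommGroup X] [NormedSpace ℝ X]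
    [NormedAddCommGroup Y] [NormedSpace ℝ Y] {N : X × Y → ℝ}

lemma aux_nonneg (hN : IsCompatibleNorm X Y N) (u : X × Y) : 0 ≤ N u := by
  obtain ⟨h1, h2, -⟩ := hN
  have h0 : N 0 = 0 := by simpa using h2 0 u
  have hneg : N (-u) = N u := by simpa using h2 (-1) u
  have := h1 u (-u)
  rw [add_neg_cancel, h0, hneg] at this
  linarith

lemma aux_snd_le (hN : IsCompatibleNorm X Y N) (a : X) (b : Y) : ‖b‖ ≤ 2 * N (a, b) := by
  obtain ⟨h1, h2, -, h4, h5, h6⟩ := hN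
  have he : ((0 : X), b) = (a, b) + (-a, (0 : Y)) := by simp
  have h4' : N (-a, (0 : Y)) = ‖a‖ := by simpa using h4 (-a)
  have := h1 (a, b) (-a, 0)
  rw [← he, h5, h4'] at this
  have := h6 a b
  linarith

end aux

section cs

lemma cs_summable {f g : ℕ → ℝ} (hf0 : ∀ k, 0 ≤ f k) (hg0 : ∀ k, 0 ≤ g k)
    (hf : Summable fun k => f k ^ 2) (hg : Summable fun k => g k ^ 2) :
    Summable fun k => f k * g k := by
  refine Summable.of_nonneg_of_le (fun k => mul_nonneg (hf0 k) (hg0 k)) (fun k => ?_)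
    ((hf.add hg).div_const 2)
  nlinarith [sq_nonneg (f k - g k)]

lemma cs_tsum_le {f g : ℕ → ℝ} (hf0 : ∀ k, 0 ≤ f k) (hg0 : ∀ k, 0 ≤ g k)
    (hf : Summable fun k => f k ^ 2) (hg : Summable fun k => g k ^ 2) :
    ∑' k, f k * g k ≤ Real.sqrt (∑' k, f k ^ 2) * Real.sqrt (∑' k, g k ^ 2) := by
  refine Summable.tsum_le_of_sum_le (cs_summable hf0 hg0 hf hg) fun s => ?_
  calc ∑ k ∈ s, f k * g k
      ≤ Real.sqrt (∑ k ∈ s, f k ^ 2) * Real.sqrt (∑ k ∈ s, g k ^ 2) := by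
        have h := Finset.sum_mul_sq_le_sq_mul_sq s f g
        have hnn : 0 ≤ ∑ k ∈ s, f k * g k :=
          Finset.sum_nonneg fun k _ => mul_nonneg (hf0 k) (hg0 k)
        have := Real.sqrt_le_sqrt h
        rwa [Real.sqrt_sq hnn, Real.sqrt_mul (Finset.sum_nonneg fun k _ => sq_nonneg _)] at this
    _ ≤ _ := by
        gcongr
        · exact Summable.sum_le_tsum s (fun i _ => sq_nonneg _) hf
        · exact Summable.sum_le_tsum s (fun i _ => sq_nonneg _) hg

end cs

section sn
variable {X : Type*} [NormedAddCommGroup X] [NormedSpace ℝ X]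
    {Y : ℕ → Type*} [∀ k, NormedAddCommGroup (Y k)] [∀ k, NormedSpace ℝ (Y k)]
    {N : ∀ k, X × Y k → ℝ}

/-- From the defining constraint, each coordinate functional is bounded. -/
lemma constraint_fst (hN : ∀ k, IsCompatibleNorm X (Y k) (N k))
    {xs' : X →L[ℝ] ℝ} {ys' : ∀ k, Y k →L[ℝ] ℝ}
    (hc : ∀ (k : ℕ) (a : X) (b : Y k), |xs' a + ys' k b| ≤ N k (a, b)) (a : X) :
    |xs' a| ≤ ‖a‖ := by
  have := hc 0 a 0
  simpa [(hN 0).2.2.2.1 a] using this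

lemma constraint_snd (hN : ∀ k, IsCompatibleNorm X (Y k) (N k))
    {xs' : X →L[ℝ] ℝ} {ys' : ∀ k, Y k →L[ℝ] ℝ}
    (hc : ∀ (k : ℕ) (a : X) (b : Y k), |xs' a + ys' k b| ≤ N k (a, b)) (k : ℕ) (b : Y k) :
    |ys' k b| ≤ ‖b‖ := by
  have := hc k 0 b
  simpa [(hN k).2.2.2.2.1 b] using this

/-- Key bound on any element of the defining set of `sigmaNorm`. -/
lemma sigmaNorm_elt_le (hN : ∀ k, IsCompatibleNorm X (Y k) (N k)) (x : X) (y : ∀ k, Y k)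
    (hy : Summable fun k => ‖y k‖ ^ 2)
    (xs' : X →L[ℝ] ℝ) (ys' : ∀ k, Y k →L[ℝ] ℝ) (α : ℕ → ℝ)
    (hc : ∀ (k : ℕ) (a : X) (b : Y k), |xs' a + ys' k b| ≤ N k (a, b))
    (hα0 : ∀ k, 0 ≤ α k) (hαs : Summable fun k => α k ^ 2) (hαt : (∑' k, α k ^ 2) ≤ 1) :
    |xs' x + ∑' k, α k * ys' k (y k)| ≤ ‖x‖ + Real.sqrt (∑' k, ‖y k‖ ^ 2) := by
  have hbd : ∀ k, ‖α k * ys' k (y k)‖ ≤ α k * ‖y k‖ := by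
    intro k
    rw [norm_mul, Real.norm_eq_abs, Real.norm_eq_abs, abs_of_nonneg (hα0 k)]
    exact mul_le_mul_of_nonneg_left (constraint_snd hN hc k (y k)) (hα0 k)
  have hsum2 : Summable fun k => α k * ‖y k‖ :=
    cs_summable hα0 (fun k => norm_nonneg _) hαs hy
  have hsum1 : Summable fun k => α k * ys' k (y k) :=
    Summable.of_norm_bounded hsum2 hbd
  have h1 : |xs' x| ≤ ‖x‖ := constraint_fst hN hc x
  have habs : |∑' k, α k * ys' k (y k)| ≤ ∑' k, |α k * ys' k (y k)| := by
    have := norm_tsum_le_tsum_norm (f := fun k => α k * ys' k (y k)) (by simpa only [Real.norm_eq_abs] using hsum1.abs)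
    simpa only [Real.norm_eq_abs] using this
  have h2 : |∑' k, α k * ys' k (y k)| ≤ ∑' k, α k * ‖y k‖ :=
    habs.trans (Summable.tsum_le_tsum (fun k => (by simpa only [Real.norm_eq_abs] using hbd k)) hsum1.abs hsum2)
  have h3 : (∑' k, α k * ‖y k‖) ≤ Real.sqrt (∑' k, α k ^ 2) * Real.sqrt (∑' k, ‖y k‖ ^ 2) :=
    cs_tsum_le hα0 (fun k => norm_nonneg _) hαs hy
  have h4 : Real.sqrt (∑' k, α k ^ 2) * Real.sqrt (∑' k, ‖y k‖ ^ 2)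
      ≤ 1 * Real.sqrt (∑' k, ‖y k‖ ^ 2) :=
    mul_le_mul_of_nonneg_right (Real.sqrt_le_one.2 hαt) (Real.sqrt_nonneg _)
  have h5 := (abs_add_le (xs' x) (∑' k, α k * ys' k (y k)))
  have := h5.trans (add_le_add h1 (h2.trans (h3.trans h4)))
  linarith

lemma sigmaNorm_bddAbove (hN : ∀ k, IsCompatibleNorm X (Y k) (N k)) (x : X) (y : ∀ k, Y k)
    (hy : Summable fun k => ‖y k‖ ^ 2) :
    BddAbove {r : ℝ | ∃ (xs : X →L[ℝ] ℝ) (ys : ∀ k, Y k →L[ℝ] ℝ) (α : ℕ → ℝ),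
      (∀ (k : ℕ) (a : X) (b : Y k), |xs a + ys k b| ≤ N k (a, b)) ∧
      (∀ k, 0 ≤ α k) ∧ (∀ k, α k ≤ 1) ∧
      (Summable fun k => (α k) ^ 2) ∧ (∑' k, (α k) ^ 2) ≤ 1 ∧
      r = |xs x + ∑' k, α k * ys k (y k)|} := by
  refine ⟨‖x‖ + Real.sqrt (∑' k, ‖y k‖ ^ 2), fun r hr => ?_⟩
  obtain ⟨xs', ys', α, hc, hα0, hα1, hαs, hαt, rfl⟩ := hr
  exact sigmaNorm_elt_le hN x y hy xs' ys' α hc hα0 hαs hαt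

lemma sigmaNorm_le (hN : ∀ k, IsCompatibleNorm X (Y k) (N k)) (x : X) (y : ∀ k, Y k)
    (hy : Summable fun k => ‖y k‖ ^ 2) :
    sigmaNorm N x y ≤ ‖x‖ + Real.sqrt (∑' k, ‖y k‖ ^ 2) := by
  refine Real.sSup_le (fun r hr => ?_) (by positivity)
  obtain ⟨xs', ys', α, hc, hα0, hα1, hαs, hαt, rfl⟩ := hr
  exact sigmaNorm_elt_le hN x y hy xs' ys' α hc hα0 hαs hαt

lemma sigmaNorm_zero_mem (hN : ∀ k, IsCompatibleNorm X (Y k) (N k)) (x : X) (y : ∀ k, Y k) :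
    (0 : ℝ) ∈ {r : ℝ | ∃ (xs : X →L[ℝ] ℝ) (ys : ∀ k, Y k →L[ℝ] ℝ) (α : ℕ → ℝ),
      (∀ (k : ℕ) (a : X) (b : Y k), |xs a + ys k b| ≤ N k (a, b)) ∧
      (∀ k, 0 ≤ α k) ∧ (∀ k, α k ≤ 1) ∧
      (Summable fun k => (α k) ^ 2) ∧ (∑' k, (α k) ^ 2) ≤ 1 ∧
      r = |xs x + ∑' k, α k * ys k (y k)|} := by
  refine ⟨0, fun k => 0, fun k => 0, fun k a b => ?_, fun k => le_refl 0,
    fun k => zero_le_one, by simpa using summable_zero, by simp, by simp⟩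
  simpa using aux_nonneg (hN k) (a, b)

lemma sigmaNorm_nonneg (hN : ∀ k, IsCompatibleNorm X (Y k) (N k)) (x : X) (y : ∀ k, Y k)
    (hy : Summable fun k => ‖y k‖ ^ 2) : 0 ≤ sigmaNorm N x y :=
  le_csSup (sigmaNorm_bddAbove hN x y hy) (sigmaNorm_zero_mem hN x y)

lemma norm_le_sigmaNorm [CompleteSpace X] (hN : ∀ k, IsCompatibleNorm X (Y k) (N k))
    (x : X) (y : ∀ k, Y k) (hy : Summable fun k => ‖y k‖ ^ 2) :
    ‖x‖ ≤ sigmaNorm N x y := by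
  obtain ⟨g, hg1, hgx⟩ := exists_dual_vector'' ℝ x
  have hmem : ‖x‖ ∈ {r : ℝ | ∃ (xs : X →L[ℝ] ℝ) (ys : ∀ k, Y k →L[ℝ] ℝ) (α : ℕ → ℝ),
      (∀ (k : ℕ) (a : X) (b : Y k), |xs a + ys k b| ≤ N k (a, b)) ∧
      (∀ k, 0 ≤ α k) ∧ (∀ k, α k ≤ 1) ∧
      (Summable fun k => (α k) ^ 2) ∧ (∑' k, (α k) ^ 2) ≤ 1 ∧
      r = |xs x + ∑' k, α k * ys k (y k)|} := by
    refine ⟨g, fun k => 0, fun k => 0, fun k a b => ?_, fun k => le_refl 0,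
      fun k => zero_le_one, by simpa using summable_zero, by simp, by simp [hgx]⟩
    calc |g a + (0 : Y k →L[ℝ] ℝ) b| = |g a| := by simp
      _ ≤ ‖g‖ * ‖a‖ := g.le_opNorm a
      _ ≤ 1 * ‖a‖ := by gcongr
      _ = ‖a‖ := one_mul _
      _ ≤ N k (a, b) := (hN k).2.2.2.2.2 a b
  exact le_csSup (sigmaNorm_bddAbove hN x y hy) hmem

end sn

section sn2
variable {X : Type*} [NormedAddCommGroup X] [NormedSpace ℝ X]
    {Y : ℕ → Type*} [∀ k, NormedAddCommGroup (Y k)] [∀ k, NormedSpace ℝ (Y k)]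
    [∀ k, CompleteSpace (Y k)] {N : ∀ k, X × Y k → ℝ}

lemma sqrt_le_two_sigmaNorm (hN : ∀ k, IsCompatibleNorm X (Y k) (N k))
    (x : X) (y : ∀ k, Y k) (hy : Summable fun k => ‖y k‖ ^ 2) :
    Real.sqrt (∑' k, ‖y k‖ ^ 2) ≤ 2 * sigmaNorm N x y := by
  have hA0 : 0 ≤ ∑' k, ‖y k‖ ^ 2 := tsum_nonneg fun k => sq_nonneg _
  rcases eq_or_lt_of_le hA0 with h0 | hApos
  · rw [← h0, Real.sqrt_zero]
    have := sigmaNorm_nonneg hN x y hy; linarith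
  set A := ∑' k, ‖y k‖ ^ 2 with hA
  set b := Real.sqrt A with hb
  have hbpos : 0 < b := Real.sqrt_pos.2 hApos
  have hb2 : b ^ 2 = A := Real.sq_sqrt hA0
  choose g hg1 hg2 using fun k => exists_dual_vector'' ℝ (y k)
  have hterm : ∀ k, (‖y k‖ / b) * (((1/2 : ℝ) • g k) (y k)) = ‖y k‖ ^ 2 / (2 * b) := by
    intro k
    have h : (g k) (y k) = ‖y k‖ := by exact_mod_cast hg2 k
    simp only [ContinuousLinearMap.smul_apply, smul_eq_mul]
    rw [h]
    ring
  have htsum : (∑' k, (‖y k‖ / b) * (((1/2 : ℝ) • g k) (y k))) = b / 2 := by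
    rw [tsum_congr hterm, tsum_div_const, ← hA]
    rw [← hb2]; field_simp
  have hmem : b / 2 ∈ {r : ℝ | ∃ (xs : X →L[ℝ] ℝ) (ys : ∀ k, Y k →L[ℝ] ℝ) (α : ℕ → ℝ),
      (∀ (k : ℕ) (a : X) (b : Y k), |xs a + ys k b| ≤ N k (a, b)) ∧
      (∀ k, 0 ≤ α k) ∧ (∀ k, α k ≤ 1) ∧
      (Summable fun k => (α k) ^ 2) ∧ (∑' k, (α k) ^ 2) ≤ 1 ∧
      r = |xs x + ∑' k, α k * ys k (y k)|} := by
    refine ⟨0, fun k => (1/2 : ℝ) • g k, fun k => ‖y k‖ / b, ?_, ?_, ?_, ?_, ?_, ?_⟩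
    · intro k a c
      have h2 : |g k c| ≤ ‖c‖ := by
        calc |g k c| ≤ ‖g k‖ * ‖c‖ := (g k).le_opNorm c
          _ ≤ 1 * ‖c‖ := mul_le_mul_of_nonneg_right (hg1 k) (norm_nonneg _)
          _ = ‖c‖ := one_mul _
      have h3 := aux_snd_le (hN k) a c
      have h1 : |(0 : X →L[ℝ] ℝ) a + ((1/2 : ℝ) • g k) c| = (1/2) * |g k c| := by
        simp [ContinuousLinearMap.smul_apply, abs_mul]
      rw [h1]; linarith
    · intro k; positivity
    · intro k
      rw [div_le_one hbpos, hb]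
      refine (Real.le_sqrt (norm_nonneg _) hA0).2 ?_
      exact Summable.le_tsum hy k (fun i _ => sq_nonneg _)
    · have := hy.div_const (b ^ 2)
      refine this.congr fun k => ?_
      rw [div_pow]
    · have : (∑' k, (‖y k‖ / b) ^ 2) = A / b ^ 2 := by
        rw [show A = ∑' k, ‖y k‖ ^ 2 from hA, ← tsum_div_const]
        exact tsum_congr fun k => by rw [div_pow]
      rw [this, hb2, div_self (ne_of_gt hApos)]
    · rw [htsum]
      simp [abs_of_nonneg (by positivity : (0:ℝ) ≤ b / 2)]
  have h2 : b / 2 ≤ sigmaNorm N x y := le_csSup (sigmaNorm_bddAbove hN x y hy) hmem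
  linarith

end sn2

/-- The dual norm of `‖·‖_Σ` satisfies
`max{‖x*‖, (Σ_k ‖y_k*‖²)^{1/2}} ≤ ‖x* + Σ_k y_k*‖_Σ ≤ ‖x*‖ + 2 (Σ_k ‖y_k*‖²)^{1/2}`. -/
theorem sigmaOpNorm_equiv
    (X : Type*) [NormedAddCommGroup X] [NormedSpace ℝ X] [CompleteSpace X]
    (Y : ℕ → Type*) [∀ k, NormedAddCommGroup (Y k)] [∀ k, NormedSpace ℝ (Y k)]
    [∀ k, CompleteSpace (Y k)]
    (N : ∀ k, X × Y k → ℝ) (hN : ∀ k, IsCompatibleNorm X (Y k) (N k))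
    (xs : X →L[ℝ] ℝ) (ys : ∀ k, Y k →L[ℝ] ℝ)
    (hys : Summable fun k => ‖ys k‖ ^ 2) :
    max ‖xs‖ (Real.sqrt (∑' k, ‖ys k‖ ^ 2)) ≤ sigmaOpNorm N xs ys ∧
      sigmaOpNorm N xs ys ≤ ‖xs‖ + 2 * Real.sqrt (∑' k, ‖ys k‖ ^ 2) := by
  classical
  set T := {r : ℝ | ∃ (x : X) (y : ∀ k, Y k),
    (Summable fun k => ‖y k‖ ^ 2) ∧ sigmaNorm N x y ≤ 1 ∧
    r = |xs x + ∑' k, ys k (y k)|} with hT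
  have hA0 : 0 ≤ ∑' k, ‖ys k‖ ^ 2 := tsum_nonneg fun k => sq_nonneg _
  -- every element of T is at most the upper bound
  have helt : ∀ r ∈ T, r ≤ ‖xs‖ + 2 * Real.sqrt (∑' k, ‖ys k‖ ^ 2) := by
    rintro r ⟨x, y, hy, h1, rfl⟩
    have hx1 : ‖x‖ ≤ 1 := (norm_le_sigmaNorm hN x y hy).trans h1
    have hy2 : Real.sqrt (∑' k, ‖y k‖ ^ 2) ≤ 2 := by
      have := sqrt_le_two_sigmaNorm hN x y hy; linarith
    have hbd : ∀ k, ‖ys k (y k)‖ ≤ ‖ys k‖ * ‖y k‖ := fun k => (ys k).le_opNorm (y k)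
    have hsum2 : Summable fun k => ‖ys k‖ * ‖y k‖ :=
      cs_summable (fun k => norm_nonneg _) (fun k => norm_nonneg _) hys hy
    have hsumn : Summable fun k => ‖ys k (y k)‖ :=
      Summable.of_nonneg_of_le (fun k => norm_nonneg _) hbd hsum2
    have habs : |∑' k, ys k (y k)| ≤ ∑' k, ‖ys k‖ * ‖y k‖ := by
      have h := norm_tsum_le_tsum_norm (f := fun k => ys k (y k)) hsumn
      have h' := Summable.tsum_le_tsum hbd hsumn hsum2
      rw [Real.norm_eq_abs] at h
      linarith
    have hcs : (∑' k, ‖ys k‖ * ‖y k‖)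
        ≤ Real.sqrt (∑' k, ‖ys k‖ ^ 2) * Real.sqrt (∑' k, ‖y k‖ ^ 2) :=
      cs_tsum_le (fun k => norm_nonneg _) (fun k => norm_nonneg _) hys hy
    have h5 : |xs x| ≤ ‖xs‖ := by
      calc |xs x| ≤ ‖xs‖ * ‖x‖ := xs.le_opNorm x
        _ ≤ ‖xs‖ * 1 := mul_le_mul_of_nonneg_left hx1 (norm_nonneg _)
        _ = ‖xs‖ := mul_one _
    have h6 : Real.sqrt (∑' k, ‖ys k‖ ^ 2) * Real.sqrt (∑' k, ‖y k‖ ^ 2)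
        ≤ Real.sqrt (∑' k, ‖ys k‖ ^ 2) * 2 :=
      mul_le_mul_of_nonneg_left hy2 (Real.sqrt_nonneg _)
    have h7 := abs_add_le (xs x) (∑' k, ys k (y k))
    linarith
  have h0T : (0 : ℝ) ∈ T := by
    refine ⟨0, fun k => 0, by simpa using summable_zero, ?_, by simp⟩
    have h := sigmaNorm_le hN (0 : X) (fun k => (0 : Y k)) (by simpa using summable_zero)
    refine h.trans ?_
    simp
  have hbddT : BddAbove T := ⟨_, helt⟩
  have hTnn : 0 ≤ sSup T := le_csSup hbddT h0T
  have hupper : sigmaOpNorm N xs ys ≤ ‖xs‖ + 2 * Real.sqrt (∑' k, ‖ys k‖ ^ 2) :=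
    Real.sSup_le helt (by positivity)
  have hlow1 : ‖xs‖ ≤ sSup T := by
    refine xs.opNorm_le_bound hTnn fun v => ?_
    rcases eq_or_ne v 0 with rfl | hv
    · simp
    have hvpos : 0 < ‖v‖ := norm_pos_iff.2 hv
    have hmem : |xs (‖v‖⁻¹ • v)| ∈ T := by
      refine ⟨‖v‖⁻¹ • v, fun k => 0, by simpa using summable_zero, ?_, by simp⟩
      have h := sigmaNorm_le hN (‖v‖⁻¹ • v) (fun k => (0 : Y k)) (by simpa using summable_zero)
      refine h.trans ?_
      have : ‖(‖v‖⁻¹ • v)‖ = 1 := by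
        rw [norm_smul, norm_inv, norm_norm, inv_mul_cancel₀ (ne_of_gt hvpos)]
      simp [this]
    have h := le_csSup hbddT hmem
    have heq : |xs (‖v‖⁻¹ • v)| = ‖v‖⁻¹ * |xs v| := by
      rw [map_smul, smul_eq_mul, abs_mul, abs_inv, abs_norm]
    rw [heq] at h
    rw [Real.norm_eq_abs]
    calc |xs v| = (‖v‖⁻¹ * |xs v|) * ‖v‖ := by field_simp
      _ ≤ sSup T * ‖v‖ := mul_le_mul_of_nonneg_right h (norm_nonneg _)
  have hlow2 : Real.sqrt (∑' k, ‖ys k‖ ^ 2) ≤ sSup T := by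
    rcases eq_or_lt_of_le hA0 with h0 | hApos
    · rw [← h0, Real.sqrt_zero]; exact hTnn
    refine le_of_forall_lt fun c hc => ?_
    obtain ⟨c', hcc', hc'A⟩ := exists_between hc
    suffices hfin : c' ≤ sSup T by linarith
    rcases le_or_gt c' 0 with hc' | hc'pos
    · linarith
    have hc2 : c' ^ 2 < ∑' k, ‖ys k‖ ^ 2 := (Real.lt_sqrt hc'pos.le).1 hc'A
    obtain ⟨s, hs⟩ : ∃ s : Finset ℕ, c' ^ 2 < ∑ k ∈ s, ‖ys k‖ ^ 2 :=
      (hys.hasSum.eventually (eventually_gt_nhds hc2)).exists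
    set Bs := ∑ k ∈ s, ‖ys k‖ ^ 2 with hBs
    have hBs0 : 0 ≤ Bs := Finset.sum_nonneg fun k _ => sq_nonneg _
    set b := Real.sqrt Bs with hb
    have hc'b : c' < b := Real.lt_sqrt_of_sq_lt hs
    have hbpos : 0 < b := lt_trans hc'pos hc'b
    have hb2 : b ^ 2 = Bs := Real.sq_sqrt hBs0
    set C := ∑ k ∈ s, ‖ys k‖ / b with hC
    have hC0 : 0 ≤ C := Finset.sum_nonneg fun k _ => by positivity
    set δ := (b - c') / (C + 1) with hδ
    have hδpos : 0 < δ := div_pos (by linarith) (by linarith)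
    have hu : ∀ k, ∃ u : Y k, ‖u‖ ≤ 1 ∧ ‖ys k‖ - δ ≤ (ys k) u := by
      intro k
      obtain ⟨v, hv1, hv2⟩ := (ys k).exists_lt_apply_of_lt_opNorm
        (show ‖ys k‖ - δ < ‖ys k‖ by linarith)
      rw [Real.norm_eq_abs] at hv2
      rcases le_or_gt 0 ((ys k) v) with h | h
      · exact ⟨v, hv1.le, le_of_lt (by rwa [abs_of_nonneg h] at hv2)⟩
      · refine ⟨-v, by simpa using hv1.le, ?_⟩
        rw [map_neg]
        rw [abs_of_neg h] at hv2
        linarith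
    choose u hu1 hu2 using hu
    set y : ∀ k, Y k := fun k => if k ∈ s then (‖ys k‖ / b) • u k else 0 with hy'
    have hy0 : ∀ k ∉ s, y k = 0 := fun k hk => by simp [hy', hk]
    have hysum : Summable fun k => ‖y k‖ ^ 2 :=
      summable_of_ne_finset_zero (s := s) fun k hk => by simp [hy0 k hk]
    have hyk : ∀ k ∈ s, ‖y k‖ ≤ ‖ys k‖ / b := by
      intro k hk
      rw [show y k = (‖ys k‖ / b) • u k by simp [hy', hk], norm_smul]
      calc ‖(‖ys k‖ / b)‖ * ‖u k‖ ≤ ‖(‖ys k‖ / b)‖ * 1 :=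
            mul_le_mul_of_nonneg_left (hu1 k) (norm_nonneg _)
        _ = ‖ys k‖ / b := by rw [mul_one, Real.norm_eq_abs, abs_of_nonneg (by positivity)]
    have htsum2 : (∑' k, ‖y k‖ ^ 2) ≤ 1 := by
      rw [tsum_eq_sum (s := s) (fun k hk => by simp [hy0 k hk])]
      calc ∑ k ∈ s, ‖y k‖ ^ 2 ≤ ∑ k ∈ s, (‖ys k‖ / b) ^ 2 :=
            Finset.sum_le_sum fun k hk => pow_le_pow_left₀ (norm_nonneg _) (hyk k hk) 2
        _ = Bs / b ^ 2 := by rw [hBs, Finset.sum_div]; exact Finset.sum_congr rfl fun k _ => (div_pow _ _ _)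
        _ = 1 := by rw [hb2, div_self (ne_of_gt (lt_of_le_of_lt (sq_nonneg c') hs))]
    have hsn : sigmaNorm N (0 : X) y ≤ 1 := by
      have h := sigmaNorm_le hN (0 : X) y hysum
      have h2 : Real.sqrt (∑' k, ‖y k‖ ^ 2) ≤ 1 := Real.sqrt_le_one.2 htsum2
      simpa using h.trans (by simpa using h2)
    have hval : (∑' k, ys k (y k)) = ∑ k ∈ s, (‖ys k‖ / b) * (ys k) (u k) := by
      rw [tsum_eq_sum (s := s) (fun k hk => by simp [hy0 k hk])]
      refine Finset.sum_congr rfl fun k hk => ?_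
      rw [show y k = (‖ys k‖ / b) • u k by simp [hy', hk], map_smul, smul_eq_mul]
    have hlow : c' ≤ ∑ k ∈ s, (‖ys k‖ / b) * (ys k) (u k) := by
      have h1 : (∑ k ∈ s, (‖ys k‖ / b) * (‖ys k‖ - δ))
          ≤ ∑ k ∈ s, (‖ys k‖ / b) * (ys k) (u k) :=
        Finset.sum_le_sum fun k hk => mul_le_mul_of_nonneg_left (hu2 k) (by positivity)
      have h2 : (∑ k ∈ s, (‖ys k‖ / b) * (‖ys k‖ - δ)) = Bs / b - δ * C := by
        rw [hBs, hC, Finset.sum_div, Finset.mul_sum, ← Finset.sum_sub_distrib]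
        refine Finset.sum_congr rfl fun k _ => ?_
        field_simp
      have h3 : Bs / b = b := by rw [← hb2]; field_simp
      have h4 : δ * (C + 1) = b - c' := by rw [hδ]; field_simp
      have h5 : δ * C ≤ δ * (C + 1) := by nlinarith
      linarith
    have hmem : |xs 0 + ∑' k, ys k (y k)| ∈ T := ⟨0, y, hysum, hsn, rfl⟩
    have hfin2 : c' ≤ |xs 0 + ∑' k, ys k (y k)| := by
      rw [map_zero, zero_add, hval]
      exact hlow.trans (le_abs_self _)
    exact hfin2.trans (le_csSup hbddT hmem)
  exact ⟨max_le hlow1 hlow2, hupper⟩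
end

section
/- In the setting of the generalized ℓ²-sum Σ(X⊕Y_k): let P_X : X → X and P_{Y_k} : Y_k → Y_k be projections such that the map x + y_k ↦ P_X x + P_{Y_k} y_k has norm ≤ 1 on (X ⊕ Y_k, ‖·‖_{X⊕Y_k}) for each k. Then the projection P : x + Σ_k y_k ↦ P_X x + Σ_k P_{Y_k} y_k satisfies ‖P‖_Σ ≤ 1. -/
/-- If `P_X : X → X` and `P_{Y_k} : Y_k → Y_k` are projections such that
each map `x + y_k ↦ P_X x + P_{Y_k} y_k` has norm `≤ 1` on `(X ⊕ Y_k, ‖·‖_{X⊕Y_k})`, then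
the projection `P : x + Σ_k y_k ↦ P_X x + Σ_k P_{Y_k} y_k` satisfies `‖P‖_Σ ≤ 1`. -/
theorem sigma_projection_norm_le_one
    (X : Type*) [NormedAddCommGroup X] [NormedSpace ℝ X] [CompleteSpace X]
    (Y : ℕ → Type*) [∀ k, NormedAddCommGroup (Y k)] [∀ k, NormedSpace ℝ (Y k)]
    [∀ k, CompleteSpace (Y k)]
    (N : ∀ k, X × Y k → ℝ) (hN : ∀ k, IsCompatibleNorm X (Y k) (N k))
    (Px : X →L[ℝ] X) (hPx : Px.comp Px = Px)
    (Py : ∀ k, Y k →L[ℝ] Y k) (hPy : ∀ k, (Py k).comp (Py k) = Py k)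
    (hP : ∀ (k : ℕ) (a : X) (b : Y k), N k (Px a, Py k b) ≤ N k (a, b)) :
    ∀ (x : X) (y : ∀ k, Y k), (Summable fun k => ‖y k‖ ^ 2) →
      sigmaNorm N (Px x) (fun k => Py k (y k)) ≤ sigmaNorm N x y := by
  classical
  intro x y hy
  -- Nonnegativity of each N k
  have hN0 : ∀ (k : ℕ) (u : X × Y k), 0 ≤ N k u := by
    intro k u
    obtain ⟨hadd, hsmul, _, hx0, _, _⟩ := hN k
    have hneg : N k (-u) = N k u := by
      have := hsmul (-1) u; simpa using this
    have h2 := hadd u (-u)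
    have h3 : N k (0 : X × Y k) = 0 := by
      have := hx0 (0 : X)
      simpa [Prod.mk_zero_zero] using this
    rw [add_neg_cancel, h3, hneg] at h2
    linarith
  set S : Set ℝ := {r : ℝ | ∃ (xs : X →L[ℝ] ℝ) (ys : ∀ k, Y k →L[ℝ] ℝ) (α : ℕ → ℝ),
    (∀ (k : ℕ) (a : X) (b : Y k), |xs a + ys k b| ≤ N k (a, b)) ∧
    (∀ k, 0 ≤ α k) ∧ (∀ k, α k ≤ 1) ∧
    (Summable fun k => (α k) ^ 2) ∧ (∑' k, (α k) ^ 2) ≤ 1 ∧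
    r = |xs x + ∑' k, α k * ys k (y k)|} with hS
  have hSnorm : sigmaNorm N x y = sSup S := rfl
  -- S is bounded above
  have hbdd : BddAbove S := by
    refine ⟨‖x‖ + (1 + ∑' k, ‖y k‖ ^ 2) / 2, ?_⟩
    rintro r ⟨xs, ys, α, hΛ, hα0, hα1, hα2, hα2s, rfl⟩
    have hxs : |xs x| ≤ ‖x‖ := by
      have := hΛ 0 x 0
      simpa [(hN 0).2.2.2.1 x] using this
    have hys : ∀ k (b : Y k), |ys k b| ≤ ‖b‖ := by
      intro k b
      have := hΛ k 0 b
      simpa [(hN k).2.2.2.2.1 b] using this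
    have hg : Summable fun k => (α k ^ 2 + ‖y k‖ ^ 2) / 2 := (hα2.add hy).div_const 2
    have hle : ∀ k, |α k * ys k (y k)| ≤ (α k ^ 2 + ‖y k‖ ^ 2) / 2 := by
      intro k
      have h1 : |α k * ys k (y k)| ≤ α k * ‖y k‖ := by
        rw [abs_mul, abs_of_nonneg (hα0 k)]
        exact mul_le_mul_of_nonneg_left (hys k (y k)) (hα0 k)
      have h2 : α k * ‖y k‖ ≤ (α k ^ 2 + ‖y k‖ ^ 2) / 2 := by
        nlinarith [sq_nonneg (α k - ‖y k‖)]
      linarith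
    have habs : Summable fun k => |α k * ys k (y k)| :=
      Summable.of_nonneg_of_le (fun k => abs_nonneg _) hle hg
    have hf : Summable fun k => α k * ys k (y k) := habs.of_abs
    have h4 : |∑' k, α k * ys k (y k)| ≤ ∑' k, |α k * ys k (y k)| := by
      have := norm_tsum_le_tsum_norm (f := fun k => α k * ys k (y k))
        (by simpa only [Real.norm_eq_abs] using habs)
      simpa only [Real.norm_eq_abs] using this
    have h5 : (∑' k, |α k * ys k (y k)|) ≤ ∑' k, (α k ^ 2 + ‖y k‖ ^ 2) / 2 :=
      Summable.tsum_le_tsum hle habs hg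
    have h6 : (∑' k, (α k ^ 2 + ‖y k‖ ^ 2) / 2) ≤ (1 + ∑' k, ‖y k‖ ^ 2) / 2 := by
      rw [tsum_div_const, Summable.tsum_add hα2 hy]
      have hys2 : (0:ℝ) ≤ ∑' k, ‖y k‖ ^ 2 := tsum_nonneg fun k => sq_nonneg _
      linarith
    calc |xs x + ∑' k, α k * ys k (y k)| ≤ |xs x| + |∑' k, α k * ys k (y k)| := abs_add_le _ _
      _ ≤ ‖x‖ + (1 + ∑' k, ‖y k‖ ^ 2) / 2 := by linarith
  -- 0 ∈ S
  have h0S : (0 : ℝ) ∈ S := by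
    refine ⟨0, fun k => 0, fun _ => 0, ?_, ?_, ?_, ?_, ?_, ?_⟩
    · intro k a b; simpa using hN0 k (a, b)
    · intro k; exact le_rfl
    · intro k; exact zero_le_one
    · simpa using summable_zero
    · simp
    · simp
  have hpos : 0 ≤ sigmaNorm N x y := by
    rw [hSnorm]; exact le_csSup hbdd h0S
  rw [sigmaNorm]
  apply Real.sSup_le _ hpos
  rintro r ⟨xs, ys, α, hΛ, hα0, hα1, hα2, hα2s, rfl⟩
  have hmem : |xs (Px x) + ∑' k, α k * ys k (Py k (y k))| ∈ S := by
    refine ⟨xs.comp Px, fun k => (ys k).comp (Py k), α, ?_, hα0, hα1, hα2, hα2s, rfl⟩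
    intro k a b
    exact le_trans (hΛ k (Px a) (Py k b)) (hP k a b)
  rw [hSnorm]
  exact le_csSup hbdd hmem
end

section
/- In the setting of the generalized ℓ²-sum: the set Λ(X⊕Y_k) is compact in the weak* topology of (Σ(X⊕Y_k))*. -/
open Metric Filter Topology in
set_option maxHeartbeats 2000000 in
/-- `Λ(X ⊕ Y_k)` is compact in the weak* topology of `(Σ(X ⊕ Y_k))*`:
the set of functions on `Σ(X ⊕ Y_k)` (elements `z = (x, (y_k))` with `Σ ‖y_k‖² < ∞`)
induced by the functionals `x* + Σ_k α_k y_k* ∈ Λ(X ⊕ Y_k)` is compact in the topology of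
pointwise convergence. -/
theorem lambda_weakStar_compact
    (X : Type*) [NormedAddCommGroup X] [NormedSpace ℝ X] [CompleteSpace X]
    (Y : ℕ → Type*) [∀ k, NormedAddCommGroup (Y k)] [∀ k, NormedSpace ℝ (Y k)]
    [∀ k, CompleteSpace (Y k)]
    (N : ∀ k, X × Y k → ℝ) (hN : ∀ k, IsCompatibleNorm X (Y k) (N k)) :
    IsCompact {F : {z : X × (∀ k, Y k) // Summable fun k => ‖z.2 k‖ ^ 2} → ℝ |
      ∃ (xs : X →L[ℝ] ℝ) (ys : ∀ k, Y k →L[ℝ] ℝ) (α : ℕ → ℝ),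
        (∀ (k : ℕ) (a : X) (b : Y k), |xs a + ys k b| ≤ N k (a, b)) ∧
        (∀ k, 0 ≤ α k) ∧ (∀ k, α k ≤ 1) ∧
        (Summable fun k => (α k) ^ 2) ∧ (∑' k, (α k) ^ 2) ≤ 1 ∧
        F = fun z => xs z.val.1 + ∑' k, α k * ys k (z.val.2 k)} := by
  classical
  set P := WeakDual ℝ X × (∀ k, WeakDual ℝ (Y k)) × (ℕ → ℝ) with hP
  set K : Set P := {p | (∀ (k : ℕ) (a : X) (b : Y k), |p.1 a + p.2.1 k b| ≤ N k (a, b)) ∧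
      (∀ k, 0 ≤ p.2.2 k ∧ p.2.2 k ≤ 1) ∧
      ∀ s : Finset ℕ, ∑ k ∈ s, (p.2.2 k) ^ 2 ≤ 1} with hK
  set Φ : P → {z : X × (∀ k, Y k) // Summable fun k => ‖z.2 k‖ ^ 2} → ℝ :=
    fun p z => p.1 z.val.1 + ∑' k, p.2.2 k * p.2.1 k (z.val.2 k) with hΦdef
  -- basic bounds for members of `K`
  have hxs : ∀ p ∈ K, ∀ a : X, |p.1 a| ≤ ‖a‖ := by
    intro p hp a
    have h := hp.1 0 a (0 : Y 0)
    simpa [map_zero, (hN 0).2.2.2.1 a] using h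
  have hys : ∀ p ∈ K, ∀ (k : ℕ) (b : Y k), |p.2.1 k b| ≤ ‖b‖ := by
    intro p hp k b
    have h := hp.1 k (0 : X) b
    simpa [map_zero, (hN k).2.2.2.2.1 b] using h
  have hAsum : ∀ p ∈ K, Summable fun k => (p.2.2 k) ^ 2 := by
    intro p hp
    exact summable_of_sum_le (fun k => sq_nonneg _) hp.2.2
  -- `K` is compact
  have hKc : IsCompact K := by
    have hS : IsCompact ((WeakDual.toStrongDual ⁻¹' closedBall 0 1 : Set (WeakDual ℝ X)) ×ˢ
        ((Set.univ.pi fun k =>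
            (WeakDual.toStrongDual ⁻¹' closedBall 0 1 : Set (WeakDual ℝ (Y k)))) ×ˢ
          (Set.univ.pi fun _ : ℕ => Set.Icc (0 : ℝ) 1))) :=
      (WeakDual.isCompact_closedBall (𝕜 := ℝ) 0 1).prod
        ((isCompact_univ_pi fun k => WeakDual.isCompact_closedBall (𝕜 := ℝ) 0 1).prod
          (isCompact_univ_pi fun _ => isCompact_Icc))
    refine hS.of_isClosed_subset ?_ ?_
    · -- `K` is closed
      have c1 : ∀ (k : ℕ) (a : X) (b : Y k),
          Continuous fun p : P => |p.1 a + p.2.1 k b| := by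
        intro k a b
        exact (((WeakDual.eval_continuous a).comp continuous_fst).add
          ((WeakDual.eval_continuous b).comp
            ((continuous_apply k).comp (continuous_fst.comp continuous_snd)))).abs
      have c2 : ∀ k : ℕ, Continuous fun p : P => p.2.2 k := fun k =>
        (continuous_apply k).comp (continuous_snd.comp continuous_snd)
      have hK1 : IsClosed {p : P | ∀ (k : ℕ) (a : X) (b : Y k),
          |p.1 a + p.2.1 k b| ≤ N k (a, b)} := by
        have : {p : P | ∀ (k : ℕ) (a : X) (b : Y k), |p.1 a + p.2.1 k b| ≤ N k (a, b)} =
            ⋂ (k : ℕ), ⋂ (a : X), ⋂ (b : Y k), {p : P | |p.1 a + p.2.1 k b| ≤ N k (a, b)} := by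
          ext p; simp [Set.mem_iInter]
        rw [this]
        exact isClosed_iInter fun k => isClosed_iInter fun a => isClosed_iInter fun b =>
          isClosed_le (c1 k a b) continuous_const
      have hK2 : IsClosed {p : P | ∀ k, 0 ≤ p.2.2 k ∧ p.2.2 k ≤ 1} := by
        have : {p : P | ∀ k, 0 ≤ p.2.2 k ∧ p.2.2 k ≤ 1} =
            ⋂ (k : ℕ), ({p : P | 0 ≤ p.2.2 k} ∩ {p : P | p.2.2 k ≤ 1}) := by
          ext p; simp [Set.mem_iInter, forall_and]
        rw [this]
        exact isClosed_iInter fun k =>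
          (isClosed_le continuous_const (c2 k)).inter (isClosed_le (c2 k) continuous_const)
      have hK3 : IsClosed {p : P | ∀ s : Finset ℕ, ∑ k ∈ s, (p.2.2 k) ^ 2 ≤ 1} := by
        have : {p : P | ∀ s : Finset ℕ, ∑ k ∈ s, (p.2.2 k) ^ 2 ≤ 1} =
            ⋂ (s : Finset ℕ), {p : P | ∑ k ∈ s, (p.2.2 k) ^ 2 ≤ 1} := by
          ext p; simp [Set.mem_iInter]
        rw [this]
        exact isClosed_iInter fun s => isClosed_le
          (continuous_finset_sum s fun k _ => (c2 k).pow 2) continuous_const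
      have : K = {p : P | ∀ (k : ℕ) (a : X) (b : Y k), |p.1 a + p.2.1 k b| ≤ N k (a, b)} ∩
          ({p : P | ∀ k, 0 ≤ p.2.2 k ∧ p.2.2 k ≤ 1} ∩
           {p : P | ∀ s : Finset ℕ, ∑ k ∈ s, (p.2.2 k) ^ 2 ≤ 1}) := by
        ext p; simp only [hK, Set.mem_setOf_eq, Set.mem_inter_iff]
      rw [this]
      exact hK1.inter (hK2.inter hK3)
    · -- `K ⊆ S`
      intro p hp
      refine ⟨?_, ?_, ?_⟩
      · simp only [Set.mem_preimage, mem_closedBall_zero_iff]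
        refine ContinuousLinearMap.opNorm_le_bound _ zero_le_one fun a => ?_
        rw [WeakDual.toStrongDual_apply]
        simpa [Real.norm_eq_abs] using hxs p hp a
      · intro k _
        simp only [Set.mem_preimage, mem_closedBall_zero_iff]
        refine ContinuousLinearMap.opNorm_le_bound _ zero_le_one fun b => ?_
        rw [WeakDual.toStrongDual_apply]
        simpa [Real.norm_eq_abs] using hys p hp k b
      · intro k _
        exact ⟨(hp.2.1 k).1, (hp.2.1 k).2⟩
  -- `Φ` is continuous on `K`
  have hΦ : ContinuousOn Φ K := by
    rw [continuousOn_pi]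
    intro z
    have hc1 : ContinuousOn (fun p : P => p.1 z.val.1) K :=
      ((WeakDual.eval_continuous z.val.1).comp continuous_fst).continuousOn
    have hc2 : ContinuousOn (fun p : P => ∑' k, p.2.2 k * p.2.1 k (z.val.2 k)) K := by
      set f : P → ℕ → ℝ := fun p k => p.2.2 k * p.2.1 k (z.val.2 k) with hf
      have hz : Summable fun k => ‖z.val.2 k‖ ^ 2 := z.prop
      -- pointwise summability facts on `K`
      have habs_le : ∀ p ∈ K, ∀ (ε : ℝ), 0 < ε → ∀ k,
          |f p k| ≤ ε / 2 * (p.2.2 k) ^ 2 + ‖z.val.2 k‖ ^ 2 * (2 * ε)⁻¹ := by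
        intro p hp ε hε k
        have h1 : |f p k| ≤ p.2.2 k * ‖z.val.2 k‖ := by
          rw [hf, abs_mul, abs_of_nonneg (hp.2.1 k).1]
          exact mul_le_mul_of_nonneg_left (hys p hp k _) (hp.2.1 k).1
        have h2 : p.2.2 k * ‖z.val.2 k‖ ≤ ε / 2 * (p.2.2 k) ^ 2 + ‖z.val.2 k‖ ^ 2 * (2 * ε)⁻¹ := by
          have hsq := sq_nonneg (ε * p.2.2 k - ‖z.val.2 k‖)
          have h2ε : (0 : ℝ) < 2 * ε := by linarith
          have key : 2 * ε * (ε / 2 * (p.2.2 k) ^ 2 + ‖z.val.2 k‖ ^ 2 * (2 * ε)⁻¹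
              - p.2.2 k * ‖z.val.2 k‖) = (ε * p.2.2 k - ‖z.val.2 k‖) ^ 2 := by
            field_simp; ring
          nlinarith [hsq, h2ε, key]
        linarith
      have hMsum : ∀ (ε : ℝ), 0 < ε → ∀ p ∈ K,
          Summable fun k => ε / 2 * (p.2.2 k) ^ 2 + ‖z.val.2 k‖ ^ 2 * (2 * ε)⁻¹ :=
        fun ε hε p hp => ((hAsum p hp).mul_left (ε / 2)).add (hz.mul_right (2 * ε)⁻¹)
      have habs : ∀ p ∈ K, Summable fun k => |f p k| := by
        intro p hp
        exact Summable.of_nonneg_of_le (fun k => abs_nonneg _)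
          (habs_le p hp 1 one_pos) (hMsum 1 one_pos p hp)
      have hsummf : ∀ p ∈ K, Summable (f p) := fun p hp => (habs p hp).of_abs
      -- uniform convergence of partial sums
      refine TendstoUniformlyOn.continuousOn (p := atTop) (F := fun n (p : P) =>
          ∑ k ∈ Finset.range n, f p k) ?_ ?_
      · rw [Metric.tendstoUniformlyOn_iff]
        intro ε hε
        have hT : Tendsto (fun n => ∑' j, ‖z.val.2 (j + n)‖ ^ 2) atTop (𝓝 0) :=
          tendsto_sum_nat_add fun k => ‖z.val.2 k‖ ^ 2
        have hev : ∀ᶠ n in atTop, ∑' j, ‖z.val.2 (j + n)‖ ^ 2 < ε ^ 2 / 2 :=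
          hT.eventually (gt_mem_nhds (by positivity))
        filter_upwards [hev] with n hn p hp
        have hfsum := hsummf p hp
        have key : (∑' k, f p k) - ∑ k ∈ Finset.range n, f p k = ∑' j, f p (j + n) := by
          rw [← hfsum.sum_add_tsum_nat_add n]; ring
        rw [Real.dist_eq, key]
        have habs' : Summable fun j => |f p (j + n)| := (summable_nat_add_iff n).2 (habs p hp)
        have hstep1 : |∑' j, f p (j + n)| ≤ ∑' j, |f p (j + n)| := by
          simpa [Real.norm_eq_abs] using
            norm_tsum_le_tsum_norm (f := fun j => f p (j + n))
              (by simpa [Real.norm_eq_abs] using habs')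
        have hM' : Summable fun j =>
            ε / 2 * (p.2.2 (j + n)) ^ 2 + ‖z.val.2 (j + n)‖ ^ 2 * (2 * ε)⁻¹ :=
          (summable_nat_add_iff n).2 (hMsum ε hε p hp)
        have hstep2 : ∑' j, |f p (j + n)| ≤
            ∑' j, (ε / 2 * (p.2.2 (j + n)) ^ 2 + ‖z.val.2 (j + n)‖ ^ 2 * (2 * ε)⁻¹) :=
          Summable.tsum_le_tsum (fun j => habs_le p hp ε hε (j + n)) habs' hM'
        have hsplit : ∑' j, (ε / 2 * (p.2.2 (j + n)) ^ 2 + ‖z.val.2 (j + n)‖ ^ 2 * (2 * ε)⁻¹) =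
            ε / 2 * ∑' j, (p.2.2 (j + n)) ^ 2 +
              (∑' j, ‖z.val.2 (j + n)‖ ^ 2) * (2 * ε)⁻¹ := by
          have hS1 : Summable fun j => ε / 2 * (p.2.2 (j + n)) ^ 2 :=
            (summable_nat_add_iff (f := fun k => ε / 2 * (p.2.2 k) ^ 2) n).2
              ((hAsum p hp).mul_left (ε / 2))
          have hS2 : Summable fun j => ‖z.val.2 (j + n)‖ ^ 2 * (2 * ε)⁻¹ :=
            (summable_nat_add_iff (f := fun k => ‖z.val.2 k‖ ^ 2 * (2 * ε)⁻¹) n).2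
              (hz.mul_right (2 * ε)⁻¹)
          rw [Summable.tsum_add hS1 hS2, tsum_mul_left, tsum_mul_right]
        have hA1 : ∑' j, (p.2.2 (j + n)) ^ 2 ≤ 1 := by
          refine le_trans (Summable.tsum_le_tsum_of_inj (· + n) (add_left_injective n)
            (fun c _ => sq_nonneg _) (fun i => le_refl _)
            ((summable_nat_add_iff n).2 (hAsum p hp)) (hAsum p hp)) ?_
          exact Summable.tsum_le_of_sum_le (hAsum p hp) hp.2.2
        have hB1 : ∑' j, ‖z.val.2 (j + n)‖ ^ 2 < ε ^ 2 / 2 := hn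
        have hB0 : (0 : ℝ) ≤ ∑' j, ‖z.val.2 (j + n)‖ ^ 2 :=
          tsum_nonneg fun j => sq_nonneg _
        have hfin : ε ^ 2 / 2 * (2 * ε)⁻¹ = ε / 4 := by field_simp; ring
        have h2εinv : (0 : ℝ) < (2 * ε)⁻¹ := by positivity
        calc |∑' j, f p (j + n)|
            ≤ ε / 2 * ∑' j, (p.2.2 (j + n)) ^ 2 +
              (∑' j, ‖z.val.2 (j + n)‖ ^ 2) * (2 * ε)⁻¹ := by
              rw [← hsplit]; exact hstep1.trans hstep2
          _ < ε := by nlinarith [mul_le_mul_of_nonneg_left hA1 (le_of_lt (half_pos hε)),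
              mul_lt_mul_of_pos_right hB1 h2εinv]
      · refine Filter.Eventually.frequently <| Filter.Eventually.of_forall fun m => Continuous.continuousOn ?_
        refine continuous_finset_sum _ fun k _ => Continuous.mul ?_ ?_
        · exact (continuous_apply k).comp (continuous_snd.comp continuous_snd)
        · exact (WeakDual.eval_continuous (z.val.2 k)).comp
            ((continuous_apply k).comp (continuous_fst.comp continuous_snd))
    exact hc1.add hc2
  -- the set in question is the image of `K` under `Φ`
  have himg : {F : {z : X × (∀ k, Y k) // Summable fun k => ‖z.2 k‖ ^ 2} → ℝ |
      ∃ (xs : X →L[ℝ] ℝ) (ys : ∀ k, Y k →L[ℝ] ℝ) (α : ℕ → ℝ),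
        (∀ (k : ℕ) (a : X) (b : Y k), |xs a + ys k b| ≤ N k (a, b)) ∧
        (∀ k, 0 ≤ α k) ∧ (∀ k, α k ≤ 1) ∧
        (Summable fun k => (α k) ^ 2) ∧ (∑' k, (α k) ^ 2) ≤ 1 ∧
        F = fun z => xs z.val.1 + ∑' k, α k * ys k (z.val.2 k)} = Φ '' K := by
    ext F
    constructor
    · rintro ⟨xs, ys, α, hpair, hα0, hα1, hαsum, hαtsum, rfl⟩
      refine ⟨(⟨xs, ys, α⟩ : P), ⟨hpair, fun k => ⟨hα0 k, hα1 k⟩, fun s => ?_⟩, rfl⟩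
      exact (Summable.sum_le_tsum s (fun k _ => sq_nonneg _) hαsum).trans hαtsum
    · rintro ⟨p, hp, rfl⟩
      exact ⟨p.1, p.2.1, p.2.2, hp.1, fun k => (hp.2.1 k).1, fun k => (hp.2.1 k).2,
        hAsum p hp, Summable.tsum_le_of_sum_le (hAsum p hp) hp.2.2, rfl⟩
  rw [himg]
  exact hKc.image_of_continuousOn hΦ
end

section
/- In the setting of the generalized ℓ²-sum Σ(X⊕Y_k): suppose X = X_1 ⊕ X_2 and c > 0 satisfy ‖x_1 + x_2 + y_k‖_{X⊕Y_k} ≥ ‖x_1‖_X + c‖x_2 + y_k‖_{X⊕Y_k} for every k ∈ ℕ, x_1 ∈ X_1, x_2 ∈ X_2, y_k ∈ Y_k. Then ‖x_1 + x_2 + Σ_k y_k‖_Σ ≥ ‖x_1‖_X + c‖x_2 + Σ_k y_k‖_Σ for every element x_1 + x_2 + Σ_k y_k of Σ(X⊕Y_k). -/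
set_option maxHeartbeats 1000000 in
/-- Suppose `X = X₁ ⊕ X₂` and `c > 0` satisfy
`‖x₁ + x₂ + y_k‖_{X⊕Y_k} ≥ ‖x₁‖ + c ‖x₂ + y_k‖_{X⊕Y_k}` for all `k`, `x₁ ∈ X₁`,
`x₂ ∈ X₂`, `y_k ∈ Y_k`.  Then
`‖x₁ + x₂ + Σ_k y_k‖_Σ ≥ ‖x₁‖ + c ‖x₂ + Σ_k y_k‖_Σ` on `Σ(X ⊕ Y_k)`. -/
theorem sigmaNorm_modulus
    (X : Type*) [NormedAddCommGroup X] [NormedSpace ℝ X] [CompleteSpace X]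
    (Y : ℕ → Type*) [∀ k, NormedAddCommGroup (Y k)] [∀ k, NormedSpace ℝ (Y k)]
    [∀ k, CompleteSpace (Y k)]
    (N : ∀ k, X × Y k → ℝ) (hN : ∀ k, IsCompatibleNorm X (Y k) (N k))
    (X1 X2 : Submodule ℝ X) (hcompl : IsCompl X1 X2) (c : ℝ) (hc : 0 < c)
    (hmod : ∀ (k : ℕ) (x1 x2 : X) (y : Y k), x1 ∈ X1 → x2 ∈ X2 →
      ‖x1‖ + c * N k (x2, y) ≤ N k (x1 + x2, y)) :
    ∀ (x1 x2 : X) (y : ∀ k, Y k), x1 ∈ X1 → x2 ∈ X2 →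
      (Summable fun k => ‖y k‖ ^ 2) →
        ‖x1‖ + c * sigmaNorm N x2 y ≤ sigmaNorm N (x1 + x2) y := by
  classical
  intro x1 x2 y hx1 hx2 hy
  -- a norming functional for x1
  obtain ⟨f, hf1, hfx⟩ : ∃ f : X →L[ℝ] ℝ, ‖f‖ ≤ 1 ∧ f x1 = ‖x1‖ := by
    by_cases h : x1 = 0
    · exact ⟨0, by simp, by simp [h]⟩
    · obtain ⟨f, hf, hfx⟩ := exists_dual_vector ℝ x1 (norm_ne_zero_iff.mpr h)
      exact ⟨f, hf.le, by exact_mod_cast hfx⟩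
  -- the projection onto X1 along X2
  set π : X →ₗ[ℝ] X := X1.subtype ∘ₗ (X1.linearProjOfIsCompl X2 hcompl) with hπdef
  have hπ1 : ∀ a : X, π a ∈ X1 := fun a => (X1.linearProjOfIsCompl X2 hcompl a).2
  have hπleft : ∀ a : X, a ∈ X1 → π a = a := by
    intro a ha
    have : X1.linearProjOfIsCompl X2 hcompl a = ⟨a, ha⟩ :=
      Submodule.linearProjOfIsCompl_apply_left hcompl ⟨a, ha⟩
    simp [π, this]
  have hπ2 : ∀ a : X, a - π a ∈ X2 := by
    intro a
    have h0 : X1.linearProjOfIsCompl X2 hcompl (a - π a) = 0 := by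
      rw [map_sub]
      have : X1.linearProjOfIsCompl X2 hcompl (π a)
          = X1.linearProjOfIsCompl X2 hcompl a := by
        have := Submodule.linearProjOfIsCompl_apply_left hcompl
          (X1.linearProjOfIsCompl X2 hcompl a)
        exact this
      rw [this, sub_self]
    exact (Submodule.linearProjOfIsCompl_apply_eq_zero_iff hcompl).mp h0
  have hπx : π (x1 + x2) = x1 := by
    have h2 : π x2 = 0 := by
      have : X1.linearProjOfIsCompl X2 hcompl x2 = 0 :=
        Submodule.linearProjOfIsCompl_apply_right' hcompl hx2
      simp [π, this]
    rw [map_add, hπleft x1 hx1, h2, add_zero]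
  -- abbreviation for the defining sets
  set T := ∑' k, ‖y k‖ ^ 2 with hT
  let SS : X → Set ℝ := fun x =>
    {r : ℝ | ∃ (xs : X →L[ℝ] ℝ) (ys : ∀ k, Y k →L[ℝ] ℝ) (α : ℕ → ℝ),
      (∀ (k : ℕ) (a : X) (b : Y k), |xs a + ys k b| ≤ N k (a, b)) ∧
      (∀ k, 0 ≤ α k) ∧ (∀ k, α k ≤ 1) ∧
      (Summable fun k => (α k) ^ 2) ∧ (∑' k, (α k) ^ 2) ≤ 1 ∧
      r = |xs x + ∑' k, α k * ys k (y k)|}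
  have hSS : ∀ x : X, sigmaNorm N x y = sSup (SS x) := fun _ => rfl
  -- every element of SS x is bounded above
  have hub : ∀ x : X, ∀ r ∈ SS x, r ≤ ‖x‖ + (1 + T) / 2 := by
    rintro x r ⟨xs, ys, α, hadm, hα0, hα1, hαs, hαle, rfl⟩
    have hxsb : |xs x| ≤ ‖x‖ := by
      have := hadm 0 x 0
      simpa [(hN 0).2.2.2.1 x] using this
    have hysb : ∀ (k : ℕ) (b : Y k), |ys k b| ≤ ‖b‖ := by
      intro k b
      have := hadm k 0 b
      simpa [(hN k).2.2.2.2.1 b] using this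
    set g : ℕ → ℝ := fun k => ((α k) ^ 2 + ‖y k‖ ^ 2) / 2 with hg
    have hgs : Summable g := (hαs.add hy).div_const 2
    have habs : ∀ k, |α k * ys k (y k)| ≤ g k := by
      intro k
      have h1 : |ys k (y k)| ≤ ‖y k‖ := hysb k (y k)
      have h2 : |α k * ys k (y k)| = α k * |ys k (y k)| := by
        rw [abs_mul, abs_of_nonneg (hα0 k)]
      have h3 : g k = (α k ^ 2 + ‖y k‖ ^ 2) / 2 := rfl
      rw [h2, h3]
      nlinarith [hα0 k, abs_nonneg (ys k (y k)), sq_nonneg (α k - ‖y k‖),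
        norm_nonneg (y k)]
    have hsumabs : Summable fun k => |α k * ys k (y k)| :=
      Summable.of_nonneg_of_le (fun k => abs_nonneg _) habs hgs
    have hsum : Summable fun k => α k * ys k (y k) := hsumabs.of_abs
    have htsum : |∑' k, α k * ys k (y k)| ≤ (1 + T) / 2 := by
      have h5 : ∀ k : ℕ, ‖α k * ys k (y k)‖ = |α k * ys k (y k)| :=
        fun k => Real.norm_eq_abs _
      calc |∑' k, α k * ys k (y k)|
          = ‖∑' k, α k * ys k (y k)‖ := (Real.norm_eq_abs _).symm
        _ ≤ ∑' k, ‖α k * ys k (y k)‖ :=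
            norm_tsum_le_tsum_norm (by simpa only [h5] using hsumabs)
        _ ≤ ∑' k, |α k * ys k (y k)| := by
            rw [tsum_congr h5]
        _ ≤ ∑' k, g k := Summable.tsum_le_tsum habs hsumabs hgs
        _ = ((∑' k, (α k) ^ 2) + T) / 2 := by
            rw [hg]
            rw [tsum_div_const, Summable.tsum_add hαs hy]
        _ ≤ (1 + T) / 2 := by linarith
    calc |xs x + ∑' k, α k * ys k (y k)|
        ≤ |xs x| + |∑' k, α k * ys k (y k)| := abs_add_le _ _
      _ ≤ ‖x‖ + (1 + T) / 2 := add_le_add hxsb htsum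
  have hbdd1 : BddAbove (SS (x1 + x2)) :=
    ⟨‖x1 + x2‖ + (1 + T) / 2, fun r hr => hub _ r hr⟩
  -- nonemptiness
  have hne : (SS x2).Nonempty := by
    refine ⟨0, 0, fun k => 0, fun _ => 0, ?_, ?_, ?_, ?_, ?_, ?_⟩
    · intro k a b
      simpa using (norm_nonneg a).trans ((hN k).2.2.2.2.2 a b)
    · intro k; exact le_refl 0
    · intro k; exact zero_le_one
    · simpa using summable_zero
    · simp
    · simp
  -- the key step
  have hkey : ∀ r ∈ SS x2, ‖x1‖ + c * r ≤ sSup (SS (x1 + x2)) := by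
    rintro r ⟨xs, ys, α, hadm, hα0, hα1, hαs, hαle, rfl⟩
    set s := xs x2 + ∑' k, α k * ys k (y k) with hs
    set ε : ℝ := if 0 ≤ s then 1 else -1 with hε
    have hεabs : |ε| = 1 := by
      rcases le_or_gt 0 s with h | h
      · simp [hε, h]
      · simp [hε, not_le.mpr h]
    have hεs : ε * s = |s| := by
      rcases le_or_gt 0 s with h | h
      · simp [hε, h, abs_of_nonneg h]
      · simp [hε, not_le.mpr h, abs_of_neg h]
    have hcε : |c * ε| = c := by
      rw [abs_mul, hεabs, mul_one, abs_of_pos hc]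
    -- the modified functionals
    set L : X →ₗ[ℝ] ℝ :=
      (f : X →ₗ[ℝ] ℝ) ∘ₗ π + (c * ε) • ((xs : X →ₗ[ℝ] ℝ) ∘ₗ (LinearMap.id - π))
      with hL
    have hLa : ∀ a : X, L a = f (π a) + (c * ε) * xs (a - π a) := by
      intro a
      simp [hL, smul_eq_mul]
    have hfb : ∀ a : X, |f (π a)| ≤ ‖π a‖ := by
      intro a
      calc |f (π a)| ≤ ‖f‖ * ‖π a‖ := f.le_opNorm _
        _ ≤ 1 * ‖π a‖ := mul_le_mul_of_nonneg_right hf1 (norm_nonneg _)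
        _ = ‖π a‖ := one_mul _
    have hLbound : ∀ a : X, ‖L a‖ ≤ 1 * ‖a‖ := by
      intro a
      rw [Real.norm_eq_abs, one_mul, hLa]
      have h2 : |xs (a - π a)| ≤ N 0 (a - π a, 0) := by
        have := hadm 0 (a - π a) 0
        simpa using this
      have h3 := hmod 0 (π a) (a - π a) 0 (hπ1 a) (hπ2 a)
      have h4 : π a + (a - π a) = a := by abel
      rw [h4, (hN 0).2.2.2.1 a] at h3
      calc |f (π a) + (c * ε) * xs (a - π a)|
          ≤ |f (π a)| + |(c * ε) * xs (a - π a)| := abs_add_le _ _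
        _ = |f (π a)| + c * |xs (a - π a)| := by rw [abs_mul, hcε]
        _ ≤ ‖π a‖ + c * N 0 (a - π a, 0) :=
            add_le_add (hfb a) (mul_le_mul_of_nonneg_left h2 hc.le)
        _ ≤ ‖a‖ := h3
    set xt : X →L[ℝ] ℝ := L.mkContinuous 1 hLbound with hxt
    set yt : ∀ k, Y k →L[ℝ] ℝ := fun k => (c * ε) • ys k with hyt
    have hxta : ∀ a : X, xt a = f (π a) + (c * ε) * xs (a - π a) := by
      intro a
      rw [hxt, LinearMap.mkContinuous_apply, hLa]
    have hyta : ∀ (k : ℕ) (b : Y k), yt k b = (c * ε) * ys k b := by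
      intro k b
      simp [hyt, smul_eq_mul]
    have hadm' : ∀ (k : ℕ) (a : X) (b : Y k), |xt a + yt k b| ≤ N k (a, b) := by
      intro k a b
      rw [hxta, hyta]
      have h2 : |xs (a - π a) + ys k b| ≤ N k (a - π a, b) := hadm k _ b
      have h3 := hmod k (π a) (a - π a) b (hπ1 a) (hπ2 a)
      have h4 : π a + (a - π a) = a := by abel
      rw [h4] at h3
      have h5 : f (π a) + (c * ε) * xs (a - π a) + (c * ε) * ys k b
          = f (π a) + (c * ε) * (xs (a - π a) + ys k b) := by ring
      rw [h5]
      calc |f (π a) + (c * ε) * (xs (a - π a) + ys k b)|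
          ≤ |f (π a)| + |(c * ε) * (xs (a - π a) + ys k b)| := abs_add_le _ _
        _ = |f (π a)| + c * |xs (a - π a) + ys k b| := by rw [abs_mul, hcε]
        _ ≤ ‖π a‖ + c * N k (a - π a, b) :=
            add_le_add (hfb a) (mul_le_mul_of_nonneg_left h2 hc.le)
        _ ≤ N k (a, b) := h3
    -- the value of the new functional
    have hval : xt (x1 + x2) + ∑' k, α k * yt k (y k) = ‖x1‖ + c * |s| := by
      have h1 : xt (x1 + x2) = ‖x1‖ + (c * ε) * xs x2 := by
        rw [hxta, hπx, add_sub_cancel_left, hfx]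
      have h2 : ∑' k, α k * yt k (y k) = (c * ε) * ∑' k, α k * ys k (y k) := by
        rw [← tsum_mul_left]
        refine tsum_congr fun k => ?_
        rw [hyta]; ring
      rw [h1, h2, ← hεs]
      rw [hs]; ring
    have hmem : ‖x1‖ + c * |s| ∈ SS (x1 + x2) := by
      refine ⟨xt, yt, α, hadm', hα0, hα1, hαs, hαle, ?_⟩
      have hnn : (0 : ℝ) ≤ ‖x1‖ + c * |s| := by positivity
      rw [hval, abs_of_nonneg hnn]
    exact le_csSup hbdd1 hmem
  rw [hSS, hSS]
  have h2 : sSup (SS x2) ≤ (sSup (SS (x1 + x2)) - ‖x1‖) / c := by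
    apply csSup_le hne
    intro r hr
    rw [le_div_iff₀ hc]
    have := hkey r hr
    linarith
  have h3 := (le_div_iff₀ hc).mp h2
  linarith
end
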